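/- arXiv:1011.5416 — 4 statements merged into one kernel-verified Lean document; each statement's English description precedes it below -/
import Mathlib

section
/- In the affine Weyl group W_aff = Q^∨ ⋊ W_0 of a reduced root system Σ_0, for w = e^μ · w_fin (with μ ∈ Q^∨ and w_fin ∈ W_0), the length of w is l(w) = Σ_{a > 0, w_fin^{-1}(a) > 0} |⟨μ, a⟩| + Σ_{a > 0, w_fin^{-1}(a) < 0} |⟨μ, a⟩ − 1|, the sums running over positive roots a ∈ Σ_0. -/
/-- The length of an element `g` of the affine Weyl group, realized as a permutation of the
vector space `V`: the number of affine roots `α = a + k` (with `a ∈ Σ₀ = pos ∪ (-pos)` and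
`k ∈ ℤ`) which are positive on the fundamental alcove `C` and whose transform
`g(α) = α ∘ g⁻¹` is negative on `C`. -/
noncomputable def affineLength {V : Type*} [AddCommGroup V] [Module ℝ V]
    (pos : Finset (Module.Dual ℝ V)) (C : Set V) (g : Equiv.Perm V) : ℕ :=
  Set.ncard {p : Module.Dual ℝ V × ℤ |
    (p.1 ∈ pos ∨ -p.1 ∈ pos) ∧
    (∀ x ∈ C, 0 < p.1 x + (p.2 : ℝ)) ∧
    (∀ x ∈ C, p.1 (g⁻¹ x) + (p.2 : ℝ) < 0)}


/-!
On the alcove `C` every root `a ∈ Σ₀ = pos ∪ -pos` takes its values in `(0, 1)` or in `(-1, 0)`,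
so `a + k` is positive on `C` exactly when `k ≥ ℓ(a)` and negative exactly when `k < ℓ(a)`, where
`ℓ(a)` is `0` for positive and `1` for negative `a`. As `w⁻¹ x = g⁻¹ (x - μ)`, the affine root
`w(a + k)` is `b + (k - ⟨μ, b⟩)` with `b = a ∘ g⁻¹`, so the inversions of `w` with gradient `a`
are the integers in `[ℓ(a), ℓ(b) + ⟨μ, b⟩)`. Reindexing by `b` and pairing a positive `b` with
`-b`, the two counts are `m.toNat` and `(-m).toNat` for `m = ⟨μ, b⟩ - ℓ(b ∘ g)`, adding up to `|m|`.
-/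

open Pointwise

namespace AffineWeyl

lemma forall_pos_add_intCast_iff {X : Type*} {C : Set X} (hC : C.Nonempty) {f : X → ℝ} {l : ℤ}
    (hf : ∀ x ∈ C, -(l : ℝ) < f x ∧ f x < 1 - l) (k : ℤ) :
    (∀ x ∈ C, 0 < f x + k) ↔ l ≤ k := by
  constructor
  · intro H
    obtain ⟨x₀, hx₀⟩ := hC
    have : (l : ℝ) < k + 1 := by linarith [H x₀ hx₀, (hf x₀ hx₀).2]
    exact Int.lt_add_one_iff.mp (by exact_mod_cast this)
  · intro hk x hx
    have : (l : ℝ) ≤ k := by exact_mod_cast hk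
    linarith [(hf x hx).1]

lemma forall_add_intCast_neg_iff {X : Type*} {C : Set X} (hC : C.Nonempty) {f : X → ℝ} {l : ℤ}
    (hf : ∀ x ∈ C, -(l : ℝ) < f x ∧ f x < 1 - l) (k : ℤ) :
    (∀ x ∈ C, f x + k < 0) ↔ k < l := by
  constructor
  · intro H
    obtain ⟨x₀, hx₀⟩ := hC
    have : (k : ℝ) < l := by linarith [H x₀ hx₀, (hf x₀ hx₀).1]
    exact_mod_cast this
  · intro hk x hx
    have : (k : ℝ) + 1 ≤ l := by exact_mod_cast hk
    linarith [(hf x hx).2]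

lemma ncard_setOf_mem_Ico {α : Type*} (s : Finset α) (lo hi : α → ℤ) :
    {p : α × ℤ | p.1 ∈ s ∧ lo p.1 ≤ p.2 ∧ p.2 < hi p.1}.ncard = ∑ a ∈ s, (hi a - lo a).toNat := by
  have : {p : α × ℤ | p.1 ∈ s ∧ lo p.1 ≤ p.2 ∧ p.2 < hi p.1} =
      ((s.sigma fun a => Finset.Ico (lo a) (hi a)).map (Equiv.sigmaEquivProd α ℤ).toEmbedding) := by
    ext ⟨a, k⟩
    rw [Finset.mem_coe, Finset.mem_map_equiv]
    simp
  rw [this, Set.ncard_coe_finset, Finset.card_map, Finset.card_sigma]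
  simp only [Int.card_Ico]

variable {V : Type*} [AddCommGroup V] [Module ℝ V] {pos : Finset (Module.Dual ℝ V)} {C : Set V}

lemma neg_notMem_of_mem (hC : C.Nonempty) (hCpos : ∀ a ∈ pos, ∀ x ∈ C, 0 < a x ∧ a x < 1)
    {a : Module.Dual ℝ V} (ha : a ∈ pos) : -a ∉ pos := by
  intro hna
  obtain ⟨x₀, hx₀⟩ := hC
  linarith [(hCpos a ha x₀ hx₀).1, (hCpos (-a) hna x₀ hx₀).1, LinearMap.neg_apply a x₀]

@[simp]
lemma dualMap_comp_symm (g : V ≃ₗ[ℝ] V) (a : Module.Dual ℝ V) :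
    g.dualMap a ∘ₗ (g.symm : V →ₗ[ℝ] V) = a := by
  ext
  simp

variable [DecidableEq (Module.Dual ℝ V)]

/-- The least `k : ℤ` for which the affine root `a + k` is positive on the alcove. -/
def alcoveLevel (pos : Finset (Module.Dual ℝ V)) (a : Module.Dual ℝ V) : ℤ :=
  if a ∈ pos then 0 else 1

lemma mem_union_neg {a : Module.Dual ℝ V} : a ∈ pos ∪ -pos ↔ a ∈ pos ∨ -a ∈ pos := by
  rw [Finset.mem_union, Finset.mem_neg']

lemma alcoveLevel_neg (hC : C.Nonempty) (hCpos : ∀ a ∈ pos, ∀ x ∈ C, 0 < a x ∧ a x < 1)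
    {a : Module.Dual ℝ V} (ha : a ∈ pos ∪ -pos) : alcoveLevel pos (-a) = 1 - alcoveLevel pos a := by
  rcases mem_union_neg.mp ha with h | h
  · simp [alcoveLevel, h, neg_notMem_of_mem hC hCpos h]
  · have ha' : a ∉ pos := by simpa using neg_notMem_of_mem hC hCpos h
    simp [alcoveLevel, h, ha']

lemma apply_mem_Ioo_alcoveLevel (hC : C.Nonempty)
    (hCpos : ∀ a ∈ pos, ∀ x ∈ C, 0 < a x ∧ a x < 1) {a : Module.Dual ℝ V} (ha : a ∈ pos ∪ -pos)
    {x : V} (hx : x ∈ C) : -(alcoveLevel pos a : ℝ) < a x ∧ a x < 1 - alcoveLevel pos a := by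
  rcases mem_union_neg.mp ha with h | h
  · simpa [alcoveLevel, h] using hCpos a h x hx
  · have ha' : a ∉ pos := by simpa using neg_notMem_of_mem hC hCpos h
    have := hCpos (-a) h x hx
    simp only [LinearMap.neg_apply] at this
    simp only [alcoveLevel, ha', if_false, Int.cast_one]
    constructor <;> linarith

lemma disjoint_neg (hC : C.Nonempty) (hCpos : ∀ a ∈ pos, ∀ x ∈ C, 0 < a x ∧ a x < 1) :
    Disjoint pos (-pos) :=
  Finset.disjoint_left.mpr fun _ ha hna => neg_notMem_of_mem hC hCpos ha (Finset.mem_neg'.mp hna)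

lemma map_dualMap_union_neg {g : V ≃ₗ[ℝ] V} (hg : ∀ a : Module.Dual ℝ V, (a ∈ pos ∨ -a ∈ pos) →
      (a ∘ₗ (g : V →ₗ[ℝ] V) ∈ pos ∨ -(a ∘ₗ (g : V →ₗ[ℝ] V)) ∈ pos)) :
    (pos ∪ -pos).map g.dualMap.toEquiv.toEmbedding = pos ∪ -pos :=
  Finset.map_eq_of_subset fun _ hb => by
    obtain ⟨a, ha, rfl⟩ := Finset.mem_map.mp hb
    exact mem_union_neg.mpr (hg a (mem_union_neg.mp ha))

lemma floor_apply_eq {μ : V} (hμint : ∀ a : Module.Dual ℝ V, (a ∈ pos ∨ -a ∈ pos) → ∃ n : ℤ, a μ = n)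
    {a : Module.Dual ℝ V} (ha : a ∈ pos ∪ -pos) : (⌊a μ⌋ : ℝ) = a μ := by
  obtain ⟨n, hn⟩ := hμint a (mem_union_neg.mp ha)
  rw [hn, Int.floor_intCast]

lemma affineLength_translation_mul_eq_sum (hC : C.Nonempty)
    (hCpos : ∀ a ∈ pos, ∀ x ∈ C, 0 < a x ∧ a x < 1)
    {τ : V → Equiv.Perm V} (hτ : ∀ ν x, τ ν x = x + ν) {μ : V}
    (hμint : ∀ a : Module.Dual ℝ V, (a ∈ pos ∨ -a ∈ pos) → ∃ n : ℤ, a μ = n)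
    {g : V ≃ₗ[ℝ] V} (hmap : (pos ∪ -pos).map g.dualMap.toEquiv.toEmbedding = pos ∪ -pos) :
    affineLength pos C (τ μ * g.toEquiv) =
      ∑ a ∈ pos ∪ -pos, (alcoveLevel pos (a ∘ₗ (g.symm : V →ₗ[ℝ] V)) +
        ⌊(a ∘ₗ (g.symm : V →ₗ[ℝ] V)) μ⌋ - alcoveLevel pos a).toNat := by
  refine Eq.trans ?_ (ncard_setOf_mem_Ico _ _ _)
  unfold affineLength
  congr 1
  ext ⟨a, k⟩
  simp only [Set.mem_ofPred_eq, ← mem_union_neg]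
  refine and_congr_right fun ha => and_congr
    (forall_pos_add_intCast_iff hC (fun x hx => apply_mem_Ioo_alcoveLevel hC hCpos ha hx) k) ?_
  set b := a ∘ₗ (g.symm : V →ₗ[ℝ] V)
  have hb : b ∈ pos ∪ -pos := by
    rw [← hmap] at ha
    obtain ⟨c, hc, rfl⟩ := Finset.mem_map.mp ha
    convert hc
    ext x
    simp [b]
  have hshift (x : V) : a ((τ μ * g.toEquiv)⁻¹ x) + k = b x + ((k - ⌊b μ⌋ : ℤ) : ℝ) := by
    have hinv : (τ μ * g.toEquiv)⁻¹ x = g.symm (x - μ) := by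
      rw [Equiv.Perm.inv_def, Equiv.symm_apply_eq]
      simp [hτ]
    rw [hinv, Int.cast_sub, floor_apply_eq hμint hb]
    simp only [b, map_sub, LinearMap.coe_comp, LinearEquiv.coe_coe, Function.comp_apply]
    ring
  simp only [hshift]
  rw [forall_add_intCast_neg_iff hC (fun x hx => apply_mem_Ioo_alcoveLevel hC hCpos hb hx)]
  omega

lemma toNat_add_toNat_neg_alcoveLevel (hC : C.Nonempty)
    (hCpos : ∀ a ∈ pos, ∀ x ∈ C, 0 < a x ∧ a x < 1) {μ : V}
    (hμint : ∀ a : Module.Dual ℝ V, (a ∈ pos ∨ -a ∈ pos) → ∃ n : ℤ, a μ = n)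
    {c d : Module.Dual ℝ V} (hc : c ∈ pos) (hd : d ∈ pos ∪ -pos) :
    ((alcoveLevel pos c + ⌊c μ⌋ - alcoveLevel pos d).toNat : ℝ) +
        ((alcoveLevel pos (-c) + ⌊(-c) μ⌋ - alcoveLevel pos (-d)).toNat : ℝ) =
      |c μ - alcoveLevel pos d| := by
  have hcR : c ∈ pos ∪ -pos := Finset.mem_union_left _ hc
  have hfloor_neg : ⌊(-c) μ⌋ = -⌊c μ⌋ := by
    obtain ⟨n, hn⟩ := hμint c (Or.inl hc)
    rw [LinearMap.neg_apply, hn, ← Int.cast_neg, Int.floor_intCast, Int.floor_intCast]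
  rw [alcoveLevel_neg hC hCpos hcR, alcoveLevel_neg hC hCpos hd, hfloor_neg,
    show alcoveLevel pos c = 0 from if_pos hc,
    show 1 - 0 + -⌊c μ⌋ - (1 - alcoveLevel pos d) = -(0 + ⌊c μ⌋ - alcoveLevel pos d) by ring,
    Int.toNat_add_toNat_neg_eq_norm, Int.norm_eq_abs]
  push_cast
  rw [floor_apply_eq hμint hcR, zero_add]

end AffineWeyl

open AffineWeyl

open scoped Classical in
/-- In the affine Weyl group `W_aff = Q^∨ ⋊ W₀` of a reduced root system
`Σ₀`, for `w = e^μ · w_fin` (with `μ ∈ Q^∨` and `w_fin ∈ W₀`, realized as the linear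
automorphism `g` of `V` permuting the roots), the length of `w` is
`l(w) = Σ_{a > 0, w_fin⁻¹(a) > 0} |⟨μ, a⟩| + Σ_{a > 0, w_fin⁻¹(a) < 0} |⟨μ, a⟩ − 1|`,
the sums running over the positive roots `a ∈ Σ₀` (here `w_fin⁻¹(a) = a ∘ g`, and
`w_fin⁻¹(a) > 0` means `a ∘ g` is a positive root). -/
theorem length_formula_semidirect
    {V : Type*} [AddCommGroup V] [Module ℝ V]
    (pos : Finset (Module.Dual ℝ V)) (C : Set V)
    (hC : C.Nonempty)
    (hCpos : ∀ a ∈ pos, ∀ x ∈ C, 0 < a x ∧ a x < 1)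
    (τ : V → Equiv.Perm V) (hτ : ∀ ν x, τ ν x = x + ν)
    (μ : V)
    (hμint : ∀ a : Module.Dual ℝ V, (a ∈ pos ∨ -a ∈ pos) → ∃ n : ℤ, a μ = n)
    (g : V ≃ₗ[ℝ] V)
    (hg : ∀ a : Module.Dual ℝ V, (a ∈ pos ∨ -a ∈ pos) →
      (a ∘ₗ (g : V →ₗ[ℝ] V) ∈ pos ∨ -(a ∘ₗ (g : V →ₗ[ℝ] V)) ∈ pos)) :
    (affineLength pos C (τ μ * g.toEquiv) : ℝ) =
      ∑ a ∈ pos, (if a ∘ₗ (g : V →ₗ[ℝ] V) ∈ pos then |a μ| else |a μ - 1|) := by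
  have hmap := map_dualMap_union_neg hg
  rw [affineLength_translation_mul_eq_sum hC hCpos hτ hμint hmap, Nat.cast_sum, ← hmap, Finset.sum_map, Finset.sum_union (disjoint_neg hC hCpos), Finset.sum_neg_index,
    ← Finset.sum_add_distrib]
  refine Finset.sum_congr rfl fun c hc => ?_
  simp only [Equiv.coe_toEmbedding, LinearEquiv.coe_toEquiv, map_neg, LinearMap.neg_comp,
    dualMap_comp_symm]
  have hgc : g.dualMap c ∈ pos ∪ -pos :=
    hmap ▸ Finset.mem_map_of_mem _ (Finset.mem_union_left _ hc)
  rw [toNat_add_toNat_neg_alcoveLevel hC hCpos hμint hc hgc]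
  change |c μ - (alcoveLevel pos (c ∘ₗ (g : V →ₗ[ℝ] V)) : ℝ)| = _
  by_cases h : c ∘ₗ (g : V →ₗ[ℝ] V) ∈ pos <;> simp [alcoveLevel, h]
end

section
/- Let W_aff be the affine Weyl group of a reduced root system Σ_0, with fundamental alcove C and special vertex x = 0. For μ in the coroot lattice, the minimal-length representative length of the coset e^μ·W_0 satisfies l((e^μ)^{W_0}) = Σ_{a(C)>0} |⟨μ,a⟩| − #{a ∈ Σ_0 : a(C) > 0 and ⟨μ,a⟩ > 0}. -/
section

open scoped Pointwise Classical

theorem ncard_setOf_mem_Ico {α : Type*} (s : Finset α) (lo hi : α → ℤ) :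
    {p : α × ℤ | p.1 ∈ s ∧ lo p.1 ≤ p.2 ∧ p.2 < hi p.1}.ncard =
      ∑ a ∈ s, (hi a - lo a).toNat := by
  have : {p : α × ℤ | p.1 ∈ s ∧ lo p.1 ≤ p.2 ∧ p.2 < hi p.1} =
      ↑((s.sigma fun a => Finset.Ico (lo a) (hi a)).map
        (Equiv.sigmaEquivProd α ℤ).toEmbedding) := by
    ext ⟨a, k⟩
    simp
  rw [this, Set.ncard_coe_finset, Finset.card_map, Finset.card_sigma]
  simp_rw [Int.card_Ico]

theorem toNat_sub_one_add_toNat_neg (n : ℤ) :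
    (((n - 1).toNat + (-n).toNat : ℕ) : ℝ) = |(n : ℝ)| - if 0 < (n : ℝ) then 1 else 0 := by
  have key : (((n - 1).toNat + (-n).toNat : ℕ) : ℤ) = |n| - if 0 < n then 1 else 0 := by
    split_ifs with h
    · rw [abs_of_pos h]; omega
    · rw [abs_of_nonpos (not_lt.mp h)]; omega
  rw [← Int.cast_natCast, key, Int.cast_sub, Int.cast_abs, Int.cast_ite, Int.cast_one,
    Int.cast_zero]
  simp only [Int.cast_pos]

variable {V : Type*} [AddCommGroup V] [Module ℝ V] {pos : Finset (Module.Dual ℝ V)} {C : Set V}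

theorem mem_union_neg {b : Module.Dual ℝ V} : b ∈ pos ∪ -pos ↔ b ∈ pos ∨ -b ∈ pos := by
  rw [Finset.mem_union, Finset.mem_neg']

/-- For a root `b` (that is, `b ∈ pos ∨ -b ∈ pos`), the value of `⌊b x⌋` at every `x ∈ C`. -/
noncomputable def alcoveFloor (pos : Finset (Module.Dual ℝ V)) (b : Module.Dual ℝ V) : ℤ :=
  if b ∈ pos then 0 else -1

theorem alcoveFloor_of_mem {b : Module.Dual ℝ V} (hb : b ∈ pos) : alcoveFloor pos b = 0 :=
  if_pos hb

theorem alcoveFloor_of_notMem {b : Module.Dual ℝ V} (hb : b ∉ pos) : alcoveFloor pos b = -1 :=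
  if_neg hb

theorem neg_notMem (hC : C.Nonempty) (hCpos : ∀ a ∈ pos, ∀ x ∈ C, 0 < a x ∧ a x < 1)
    {d : Module.Dual ℝ V} (hd : d ∈ pos) : -d ∉ pos := fun hnd => by
  obtain ⟨x, hx⟩ := hC
  have := (hCpos _ hnd x hx).1
  rw [LinearMap.neg_apply] at this
  linarith [(hCpos d hd x hx).1]

theorem apply_mem_Ioo_alcoveFloor (hCpos : ∀ a ∈ pos, ∀ x ∈ C, 0 < a x ∧ a x < 1)
    {b : Module.Dual ℝ V} (hb : b ∈ pos ∨ -b ∈ pos) {x : V} (hx : x ∈ C) :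
    b x ∈ Set.Ioo (alcoveFloor pos b : ℝ) (alcoveFloor pos b + 1) := by
  by_cases h : b ∈ pos
  · simpa [alcoveFloor, h] using hCpos b h x hx
  · have := hCpos _ (hb.resolve_left h) x hx
    simp only [LinearMap.neg_apply] at this
    simp only [alcoveFloor, h, if_false]
    constructor <;> push_cast <;> linarith

theorem apply_ne_intCast (hCpos : ∀ a ∈ pos, ∀ x ∈ C, 0 < a x ∧ a x < 1)
    {b : Module.Dual ℝ V} (hb : b ∈ pos ∨ -b ∈ pos) {x : V} (hx : x ∈ C) (n : ℤ) :
    b x ≠ n := by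
  rintro hn
  obtain ⟨h1, h2⟩ := apply_mem_Ioo_alcoveFloor hCpos hb hx
  rw [hn] at h1 h2
  norm_cast at h1 h2
  omega

theorem forall_mem_pos_add_iff (hC : C.Nonempty)
    (hCpos : ∀ a ∈ pos, ∀ x ∈ C, 0 < a x ∧ a x < 1)
    {b : Module.Dual ℝ V} (hb : b ∈ pos ∨ -b ∈ pos) (k : ℤ) :
    (∀ x ∈ C, 0 < b x + k) ↔ 0 ≤ alcoveFloor pos b + k := by
  constructor
  · intro h
    obtain ⟨x, hx⟩ := hC
    have : ((-1 : ℤ) : ℝ) < (alcoveFloor pos b + k : ℤ) := by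
      push_cast
      linarith [h x hx, (apply_mem_Ioo_alcoveFloor hCpos hb hx).2]
    have : -1 < alcoveFloor pos b + k := by exact_mod_cast this
    omega
  · intro h x hx
    have : (0 : ℝ) ≤ (alcoveFloor pos b + k : ℤ) := by exact_mod_cast h
    push_cast at this
    linarith [(apply_mem_Ioo_alcoveFloor hCpos hb hx).1]

theorem forall_mem_add_neg_iff (hC : C.Nonempty)
    (hCpos : ∀ a ∈ pos, ∀ x ∈ C, 0 < a x ∧ a x < 1)
    {b : Module.Dual ℝ V} (hb : b ∈ pos ∨ -b ∈ pos) (k : ℤ) :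
    (∀ x ∈ C, b x + k < 0) ↔ alcoveFloor pos b + k < 0 := by
  constructor
  · intro h
    obtain ⟨x, hx⟩ := hC
    have : ((alcoveFloor pos b + k : ℤ) : ℝ) < 0 := by
      push_cast
      linarith [h x hx, (apply_mem_Ioo_alcoveFloor hCpos hb hx).1]
    exact_mod_cast this
  · intro h x hx
    have : ((alcoveFloor pos b + k : ℤ) : ℝ) ≤ -1 := by exact_mod_cast (by omega : _ ≤ (-1 : ℤ))
    push_cast at this
    linarith [(apply_mem_Ioo_alcoveFloor hCpos hb hx).2]

/-- The functional `b ∘ σ`, or the junk value `0` when `b ∘ σ` is not linear. -/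
noncomputable def precomp (σ : Equiv.Perm V) (b : Module.Dual ℝ V) : Module.Dual ℝ V :=
  if h : ∃ c : Module.Dual ℝ V, ∀ x, b (σ x) = c x then h.choose else 0

theorem precomp_eq {σ : Equiv.Perm V} {b c : Module.Dual ℝ V} (h : ∀ x, b (σ x) = c x) :
    precomp σ b = c := by
  have hex : ∃ c : Module.Dual ℝ V, ∀ x, b (σ x) = c x := ⟨c, h⟩
  rw [precomp, dif_pos hex]
  ext x
  rw [← hex.choose_spec x, h x]

def PreservesRoots (pos : Finset (Module.Dual ℝ V)) (W0 : Subgroup (Equiv.Perm V)) : Prop :=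
  ∀ σ ∈ W0, ∀ b : Module.Dual ℝ V, (b ∈ pos ∨ -b ∈ pos) →
    ∃ c : Module.Dual ℝ V, (c ∈ pos ∨ -c ∈ pos) ∧ ∀ x, b (σ x) = c x

section RootPermuting

variable {W0 : Subgroup (Equiv.Perm V)} {σ : Equiv.Perm V} {b : Module.Dual ℝ V}

theorem precomp_mem (hW0perm : PreservesRoots pos W0) (hσ : σ ∈ W0)
    (hb : b ∈ pos ∨ -b ∈ pos) : precomp σ b ∈ pos ∨ -precomp σ b ∈ pos := by
  obtain ⟨c, hc, hbc⟩ := hW0perm σ hσ b hb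
  rwa [precomp_eq hbc]

theorem precomp_apply (hW0perm : PreservesRoots pos W0) (hσ : σ ∈ W0)
    (hb : b ∈ pos ∨ -b ∈ pos) (x : V) : precomp σ b x = b (σ x) := by
  obtain ⟨c, -, hbc⟩ := hW0perm σ hσ b hb
  rw [precomp_eq hbc, hbc]

theorem precomp_inv_precomp (hW0perm : PreservesRoots pos W0) (hσ : σ ∈ W0)
    (hb : b ∈ pos ∨ -b ∈ pos) : precomp σ⁻¹ (precomp σ b) = b :=
  precomp_eq fun x => by simp [precomp_apply hW0perm hσ hb]

theorem sum_precomp (hW0perm : PreservesRoots pos W0) (hσ : σ ∈ W0) {M : Type*}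
    [AddCommMonoid M] (F : Module.Dual ℝ V → M) :
    ∑ b ∈ pos ∪ -pos, F (precomp σ b) = ∑ b ∈ pos ∪ -pos, F b := by
  refine Finset.sum_nbij' (precomp σ) (precomp σ⁻¹) (fun b hb => ?_) (fun b hb => ?_)
    (fun b hb => ?_) (fun b hb => ?_) (fun _ _ => rfl) <;> rw [mem_union_neg] at *
  · exact precomp_mem hW0perm hσ hb
  · exact precomp_mem hW0perm (inv_mem hσ) hb
  · exact precomp_inv_precomp hW0perm hσ hb
  · simpa using precomp_inv_precomp hW0perm (inv_mem hσ) hb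

end RootPermuting

section Length

variable {W0 : Subgroup (Equiv.Perm V)} {σ g : Equiv.Perm V} {μ : V}

theorem affineLength_eq_sum (hC : C.Nonempty)
    (hCpos : ∀ a ∈ pos, ∀ x ∈ C, 0 < a x ∧ a x < 1) (hW0perm : PreservesRoots pos W0)
    (hσ : σ ∈ W0) (hμ : ∀ e, (e ∈ pos ∨ -e ∈ pos) → (⌊e μ⌋ : ℝ) = e μ)
    (hg : ∀ x, g x = σ x + μ) :
    affineLength pos C g = ∑ b ∈ pos ∪ -pos,
      (⌊precomp σ⁻¹ b μ⌋ - alcoveFloor pos (precomp σ⁻¹ b) + alcoveFloor pos b).toNat := by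
  have hg_inv : ∀ x, g⁻¹ x = σ⁻¹ (x - μ) := fun x => by
    rw [Equiv.Perm.inv_eq_iff_eq, hg]
    simp
  simp_rw [← sub_neg_eq_add _ (alcoveFloor pos _), ← ncard_setOf_mem_Ico, affineLength]
  congr 1
  ext ⟨b, k⟩
  simp only [Set.mem_ofPred_eq, mem_union_neg]
  refine and_congr_right fun hb => ?_
  have hc := precomp_mem hW0perm (inv_mem hσ) hb
  have hshift : ∀ x, b (g⁻¹ x) + k = precomp σ⁻¹ b x + ((k - ⌊precomp σ⁻¹ b μ⌋ : ℤ) : ℝ) :=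
    fun x => by
      rw [hg_inv, ← precomp_apply hW0perm (inv_mem hσ) hb, map_sub]
      push_cast
      rw [hμ _ hc]
      ring
  simp only [hshift, forall_mem_pos_add_iff hC hCpos hb, forall_mem_add_neg_iff hC hCpos hc]
  omega

theorem sum_toNat_le_affineLength (hC : C.Nonempty)
    (hCpos : ∀ a ∈ pos, ∀ x ∈ C, 0 < a x ∧ a x < 1) (hW0perm : PreservesRoots pos W0)
    (hσ : σ ∈ W0) (hμ : ∀ e, (e ∈ pos ∨ -e ∈ pos) → (⌊e μ⌋ : ℝ) = e μ)
    (hg : ∀ x, g x = σ x + μ) :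
    ∑ e ∈ pos ∪ -pos, (⌊e μ⌋ - alcoveFloor pos e - 1).toNat ≤ affineLength pos C g := by
  rw [affineLength_eq_sum hC hCpos hW0perm hσ hμ hg, ← sum_precomp hW0perm (inv_mem hσ)
    fun e => (⌊e μ⌋ - alcoveFloor pos e - 1).toNat]
  refine Finset.sum_le_sum fun b _ => Int.toNat_le_toNat ?_
  have : -1 ≤ alcoveFloor pos b := by unfold alcoveFloor; split_ifs <;> norm_num
  omega

theorem affineLength_eq_sum_toNat (hC : C.Nonempty)
    (hCpos : ∀ a ∈ pos, ∀ x ∈ C, 0 < a x ∧ a x < 1) (hW0perm : PreservesRoots pos W0)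
    (hσ : σ ∈ W0) (hμ : ∀ e, (e ∈ pos ∨ -e ∈ pos) → (⌊e μ⌋ : ℝ) = e μ)
    (hg : ∀ x, g x = σ x + μ) {x₀ : V} (hx₀ : x₀ ∈ C)
    (hdom : ∀ a ∈ pos, 0 < a (σ⁻¹ (x₀ - μ))) :
    affineLength pos C g = ∑ e ∈ pos ∪ -pos, (⌊e μ⌋ - alcoveFloor pos e - 1).toNat := by
  rw [affineLength_eq_sum hC hCpos hW0perm hσ hμ hg, ← sum_precomp hW0perm (inv_mem hσ)
    fun e => (⌊e μ⌋ - alcoveFloor pos e - 1).toNat]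
  refine Finset.sum_congr rfl fun b hb => ?_
  rw [mem_union_neg] at hb
  by_cases hbpos : b ∈ pos
  · have hc := precomp_mem hW0perm (inv_mem hσ) hb
    have hlt : (⌊precomp σ⁻¹ b μ⌋ : ℝ) < ((alcoveFloor pos (precomp σ⁻¹ b) + 1 : ℤ) : ℝ) := by
      have := hdom b hbpos
      rw [← precomp_apply hW0perm (inv_mem hσ) hb, map_sub, ← hμ _ hc] at this
      push_cast
      linarith [(apply_mem_Ioo_alcoveFloor hCpos hc hx₀).2]
    have : ⌊precomp σ⁻¹ b μ⌋ < alcoveFloor pos (precomp σ⁻¹ b) + 1 := by exact_mod_cast hlt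
    rw [alcoveFloor_of_mem hbpos]
    omega
  · rw [alcoveFloor_of_notMem hbpos]
    ring_nf

theorem cast_sum_toNat_eq_sum_abs_sub_card (hC : C.Nonempty)
    (hCpos : ∀ a ∈ pos, ∀ x ∈ C, 0 < a x ∧ a x < 1)
    (hμ : ∀ e, (e ∈ pos ∨ -e ∈ pos) → (⌊e μ⌋ : ℝ) = e μ) :
    ((∑ e ∈ pos ∪ -pos, (⌊e μ⌋ - alcoveFloor pos e - 1).toNat : ℕ) : ℝ) =
      ∑ a ∈ pos, |a μ| - ((pos.filter (fun a => 0 < a μ)).card : ℝ) := by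
  have hdisj : Disjoint pos (-pos) := Finset.disjoint_left.mpr fun d hd hnd =>
    neg_notMem hC hCpos hd (Finset.mem_neg'.mp hnd)
  rw [Finset.sum_union hdisj, Finset.sum_neg_index, ← Finset.sum_add_distrib,
    Finset.natCast_card_filter, ← Finset.sum_sub_distrib, Nat.cast_sum]
  refine Finset.sum_congr rfl fun d hd => ?_
  obtain ⟨n, hn⟩ : ∃ n : ℤ, d μ = n := ⟨_, (hμ d (Or.inl hd)).symm⟩
  rw [alcoveFloor_of_mem hd, alcoveFloor_of_notMem (neg_notMem hC hCpos hd),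
    LinearMap.neg_apply, hn, ← Int.cast_neg, Int.floor_intCast, Int.floor_intCast,
    ← toNat_sub_one_add_toNat_neg]
  congr 3 <;> ring

end Length

theorem sum_apply_coroot_pos {x₀ : V} (hx₀ : ∀ d ∈ pos, 0 < d x₀) {a : Module.Dual ℝ V}
    (ha : a ∈ pos) {v : V} (hv : a v = 2)
    (hrefl : ∀ d ∈ pos, d - d v • a ∈ pos ∨ -(d - d v • a) ∈ pos) :
    0 < ∑ d ∈ pos, d v := by
  -- `φ d = d ∘ s_a`. The positive roots kept positive by `s_a` cancel in pairs `d, φ d`;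
  -- the others (among them `a`) satisfy `d v > 0`.
  set φ : Module.Dual ℝ V → Module.Dual ℝ V := fun d => d - d v • a
  have hφv : ∀ d, φ d v = -d v := fun d => by simp [φ, hv]; ring
  have hφφ : ∀ d, φ (φ d) = d := fun d => by ext x; simp [φ, hv]; ring
  have hS : ∑ d ∈ pos with φ d ∈ pos, d v = 0 := by
    refine Finset.sum_involution (fun d _ => φ d) (fun d _ => by rw [hφv]; ring)
      (fun d _ hd hfix => hd ?_) (fun d hd => ?_) (fun d _ => hφφ d)
    · have := hφv d
      rw [hfix] at this
      linarith
    · rw [Finset.mem_filter] at hd ⊢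
      exact ⟨hd.2, (hφφ d).symm ▸ hd.1⟩
  have hT : 0 < ∑ d ∈ pos with φ d ∉ pos, d v := by
    refine Finset.sum_pos (fun d hd => ?_) ⟨a, Finset.mem_filter.mpr ⟨ha, ?_⟩⟩
    · rw [Finset.mem_filter] at hd
      have hφd := hx₀ _ ((hrefl d hd.1).resolve_left hd.2)
      simp only [LinearMap.neg_apply, LinearMap.sub_apply, LinearMap.smul_apply,
        smul_eq_mul] at hφd
      nlinarith [hx₀ d hd.1, hx₀ a ha]
    · have : φ a = -a := by ext x; simp [φ, hv]; ring
      intro h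
      have := hx₀ _ (this ▸ h)
      simp only [LinearMap.neg_apply] at this
      linarith [hx₀ a ha]
  rw [← Finset.sum_filter_add_sum_filter_not pos (fun d => φ d ∈ pos)]
  linarith

theorem exists_mem_forall_pos_apply {W0 : Subgroup (Equiv.Perm V)}
    (hW0perm : PreservesRoots pos W0) {cv : Module.Dual ℝ V → V}
    (hcv : ∀ a ∈ pos, a (cv a) = 2) (hrefl : ∀ a ∈ pos, ∃ s ∈ W0, ∀ x, s x = x - a x • cv a)
    {x₀ : V} (hx₀ : ∀ a ∈ pos, 0 < a x₀) {q : V} (hq : ∀ e, (e ∈ pos ∨ -e ∈ pos) → e q ≠ 0) :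
    ∃ w ∈ W0, ∀ a ∈ pos, 0 < a (w q) := by
  set ρ : Equiv.Perm V → ℝ := fun w => ∑ d ∈ pos, d (w q)
  have hfin : (ρ '' W0).Finite := by
    -- `ρ w` only depends on the roots `d ∘ w`, `d ∈ pos`.
    refine (Set.finite_range fun F : pos → (pos ∪ -pos : Finset _) =>
      ∑ d, (F d : Module.Dual ℝ V) q).subset ?_
    rintro _ ⟨w, hw, rfl⟩
    refine ⟨fun d => ⟨precomp w d, mem_union_neg.mpr (precomp_mem hW0perm hw (Or.inl d.2))⟩,
      ?_⟩
    change _ = ∑ d ∈ pos, d (w q)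
    rw [← Finset.sum_coe_sort pos]
    exact Finset.sum_congr rfl fun d _ => precomp_apply hW0perm hw (Or.inl d.2) q
  obtain ⟨_, ⟨w, hw, rfl⟩, hmax⟩ := Set.exists_max_image _ id hfin ⟨_, 1, W0.one_mem, rfl⟩
  refine ⟨w, hw, fun a ha => ?_⟩
  obtain ⟨s, hs, hsx⟩ := hrefl a ha
  have hρ : 0 < ∑ d ∈ pos, d (cv a) := by
    refine sum_apply_coroot_pos hx₀ ha (hcv a ha) fun d hd => ?_
    obtain ⟨c, hc, hdc⟩ := hW0perm s hs d (Or.inl hd)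
    have hsd : c = d - d (cv a) • a := by ext x; simp [← hdc, hsx, mul_comm]
    rwa [← hsd]
  have hstep : ρ (s * w) = ρ w - a (w q) * ∑ d ∈ pos, d (cv a) := by
    simp only [ρ, Equiv.Perm.mul_apply, hsx, map_sub, map_smul, smul_eq_mul,
      Finset.sum_sub_distrib, Finset.mul_sum]
  have hle : 0 ≤ a (w q) := by
    have := hmax _ ⟨s * w, mul_mem hs hw, rfl⟩
    simp only [id, hstep] at this
    nlinarith
  obtain ⟨c, hc, hac⟩ := hW0perm w hw a (Or.inl ha)
  exact hle.lt_of_ne (hac q ▸ hq c hc).symm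

end

open scoped Classical in
theorem length_min_coset_rep_special_vertex_general
    {V : Type*} [AddCommGroup V] [Module ℝ V]
    (pos : Finset (Module.Dual ℝ V)) (C : Set V)
    (hC : C.Nonempty)
    (hCpos : ∀ a ∈ pos, ∀ x ∈ C, 0 < a x ∧ a x < 1)
    (cv : Module.Dual ℝ V → V)
    (hcv : ∀ a ∈ pos, a (cv a) = 2)
    (W0 : Subgroup (Equiv.Perm V))
    (hW0gen : W0 = Subgroup.closure
      {σ : Equiv.Perm V | ∃ a ∈ pos, ∀ x, σ x = x - a x • cv a})
    (hW0perm : ∀ σ ∈ W0, ∀ b : Module.Dual ℝ V, (b ∈ pos ∨ -b ∈ pos) →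
      ∃ c : Module.Dual ℝ V, (c ∈ pos ∨ -c ∈ pos) ∧ ∀ x, b (σ x) = c x)
    (τ : V → Equiv.Perm V) (hτ : ∀ ν x, τ ν x = x + ν)
    (μ : V)
    (hμint : ∀ a : Module.Dual ℝ V, (a ∈ pos ∨ -a ∈ pos) → ∃ n : ℤ, a μ = n) :
    ((sInf ((fun σ : Equiv.Perm V => affineLength pos C (τ μ * σ)) ''
        (W0 : Set (Equiv.Perm V))) : ℕ) : ℝ) =
      (∑ a ∈ pos, |a μ|) - ((pos.filter (fun a => 0 < a μ)).card : ℝ) := by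
  have ⟨x₀, hx₀⟩ := hC
  have hμ : ∀ e, (e ∈ pos ∨ -e ∈ pos) → (⌊e μ⌋ : ℝ) = e μ := fun e he => by
    obtain ⟨n, hn⟩ := hμint e he
    rw [hn, Int.floor_intCast]
  have hrefl : ∀ a ∈ pos, ∃ s ∈ W0, ∀ x, s x = x - a x • cv a := fun a ha =>
    have hs : ∀ x, (Module.reflection (hcv a ha)).toEquiv x = x - a x • cv a :=
      fun y => Module.reflection_apply y (hcv a ha)
    ⟨_, hW0gen ▸ Subgroup.subset_closure ⟨a, ha, hs⟩, hs⟩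
  have hq : ∀ e, (e ∈ pos ∨ -e ∈ pos) → e (x₀ - μ) ≠ 0 := fun e he => by
    rw [map_sub, sub_ne_zero, ← hμ e he]
    exact apply_ne_intCast hCpos he hx₀ _
  obtain ⟨w, hw, hwq⟩ := exists_mem_forall_pos_apply hW0perm hcv hrefl
    (fun a ha => (hCpos a ha x₀ hx₀).1) hq
  open scoped Pointwise in
  have hleast : IsLeast ((fun σ : Equiv.Perm V => affineLength pos C (τ μ * σ)) ''
      (W0 : Set (Equiv.Perm V))) (∑ e ∈ pos ∪ -pos, (⌊e μ⌋ - alcoveFloor pos e - 1).toNat) := by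
    refine ⟨⟨w⁻¹, inv_mem hw, ?_⟩, ?_⟩
    · exact affineLength_eq_sum_toNat hC hCpos hW0perm (inv_mem hw) hμ (fun x => hτ μ _) hx₀
        (by simpa using hwq)
    · rintro _ ⟨σ, hσ, rfl⟩
      exact sum_toNat_le_affineLength hC hCpos hW0perm hσ hμ (fun x => hτ μ _)
  rw [hleast.csInf_eq, cast_sum_toNat_eq_sum_abs_sub_card hC hCpos hμ]

open scoped Classical in
/-- Let `W_aff` be the affine Weyl group of a reduced root system `Σ₀`,
with fundamental alcove `C` and special vertex `x = 0`.  For `μ` in the coroot lattice,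
the length of the minimal-length representative of the coset `e^μ · W₀` satisfies
`l((e^μ)^{W₀}) = Σ_{a(C)>0} |⟨μ,a⟩| − #{a ∈ Σ₀ : a(C) > 0 and ⟨μ,a⟩ > 0}`.
Here `W₀` (the finite Weyl group, the stabilizer of the special vertex `0`) is the group
generated by the reflections `s_a : x ↦ x − a(x) • a^∨` in the positive roots `a`, and the
length of the minimal-length coset representative is the infimum of the lengths over the
coset `{e^μ · v : v ∈ W₀}`. -/
theorem length_min_coset_rep_special_vertex
    {V : Type*} [AddCommGroup V] [Module ℝ V]
    (pos : Finset (Module.Dual ℝ V)) (C : Set V)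
    (hC : C.Nonempty)
    (hCpos : ∀ a ∈ pos, ∀ x ∈ C, 0 < a x ∧ a x < 1)
    (cv : Module.Dual ℝ V → V)
    (hcv : ∀ a ∈ pos, a (cv a) = 2)
    (hcry : ∀ a ∈ pos, ∀ b : Module.Dual ℝ V, (b ∈ pos ∨ -b ∈ pos) → ∃ n : ℤ, b (cv a) = n)
    (W0 : Subgroup (Equiv.Perm V))
    (hW0gen : W0 = Subgroup.closure
      {σ : Equiv.Perm V | ∃ a ∈ pos, ∀ x, σ x = x - a x • cv a})
    (hW0perm : ∀ σ ∈ W0, ∀ b : Module.Dual ℝ V, (b ∈ pos ∨ -b ∈ pos) →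
      ∃ c : Module.Dual ℝ V, (c ∈ pos ∨ -c ∈ pos) ∧ ∀ x, b (σ x) = c x)
    (τ : V → Equiv.Perm V) (hτ : ∀ ν x, τ ν x = x + ν)
    (μ : V)
    (hμint : ∀ a : Module.Dual ℝ V, (a ∈ pos ∨ -a ∈ pos) → ∃ n : ℤ, a μ = n) :
    ((sInf ((fun σ : Equiv.Perm V => affineLength pos C (τ μ * σ)) ''
        (W0 : Set (Equiv.Perm V))) : ℕ) : ℝ) =
      (∑ a ∈ pos, |a μ|) - ((pos.filter (fun a => 0 < a μ)).card : ℝ) :=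
  length_min_coset_rep_special_vertex_general pos C hC hCpos cv hcv W0 hW0gen hW0perm τ hτ μ hμint
end

section
/- Let W_aff = ℤ^m ⋊ W_0 be the affine Weyl group of type C_m with W_0 = S_m ⋊ {±1}^m, simple reflections s_1,...,s_m of W_0 (s_i = transposition (i,i+1) for i<m, s_m = sign change in coordinate m) and affine simple reflection s_0 = translation by (1,0,...,0) composed with sign change in the first coordinate. Then for 0 ≤ p ≤ m the element w_{p,2} = ∏_{i=1}^{p} (s_0 s_1 ⋯ s_{i-1}) has length p(p+1)/2 and its image under W_aff → W_aff/W_0 is the class of the coweight μ_p = (1^{(p)}, 0^{(m-p)}). -/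
/-- The affine reflection of `ℝ^m` given by `x_j ↦ c - x_j` (and fixing the other
coordinates). -/
def coordReflect (m : ℕ) (j : Fin m) (c : ℝ) : Equiv.Perm (Fin m → ℝ) :=
  Function.Involutive.toPerm (fun x => Function.update x j (c - x j)) (by
    intro x
    funext kk
    rcases eq_or_ne kk j with h | h
    · subst h; simp
    · simp [Function.update_of_ne h])

/-- The simple affine reflections `s_0, s_1, …, s_m` of the affine Weyl group of type
`C_m` acting on `ℝ^m`: `s_0 : x ↦ (1 - x_1, x_2, …)` (translation by `(1,0,…,0)`
composed with the sign change in the first coordinate), `s_i` (for `1 ≤ i ≤ m-1`) the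
transposition of coordinates `i, i+1`, and `s_m` the sign change in the last coordinate. -/
def simpleReflC (m : ℕ) (hm : 0 < m) (i : ℕ) : Equiv.Perm (Fin m → ℝ) :=
  if i = 0 then coordReflect m ⟨0, hm⟩ 1
  else if h : i < m then
    Equiv.arrowCongr (Equiv.swap (⟨i - 1, by omega⟩ : Fin m) ⟨i, h⟩) (Equiv.refl ℝ)
  else coordReflect m ⟨m - 1, by omega⟩ 0

/-- The element `w_{p,2} = ∏_{i=1}^{p} (s_0 s_1 ⋯ s_{i-1})` of the affine Weyl group of
type `C_m` (the factors composed so that the `i = 1` factor acts first). -/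
def wp2 (m : ℕ) (hm : 0 < m) (p : ℕ) : Equiv.Perm (Fin m → ℝ) :=
  (((List.range p).map
    (fun i => ((List.range (i + 1)).map (simpleReflC m hm)).prod)).reverse).prod

/-- The roots of the root system of type `C_m`, realized as functions `ℝ^m → ℝ`:
`±e_i ± e_j` (`i < j`) and `±2e_i`. -/
def rootsC (m : ℕ) : Set ((Fin m → ℝ) → ℝ) :=
  {a | (∃ i j : Fin m, i < j ∧
        (a = (fun x => x i - x j) ∨ a = (fun x => x i + x j) ∨
         a = (fun x => x j - x i) ∨ a = (fun x => -(x i) - x j))) ∨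
    (∃ i : Fin m, a = (fun x => 2 * x i) ∨ a = (fun x => -(2 * x i)))}

/-- The fundamental alcove of the affine Weyl group of type `C_m` inside the positive
Weyl chamber: `1/2 > x_1 > x_2 > ⋯ > x_m > 0`. -/
def alcoveC (m : ℕ) : Set (Fin m → ℝ) :=
  {x | (∀ i j : Fin m, i < j → x j < x i) ∧ (∀ i, 0 < x i) ∧ (∀ i, x i < 1 / 2)}

/-!
`w_{p,2}` acts on `ℝ^m` by `x ↦ (1 - x_p, …, 1 - x_1, x_{p+1}, …, x_m)`: an involution sending
`0` to `μ_p` and the fundamental alcove `A` into the region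
`1 > y_1 > ⋯ > y_p > 1/2 > y_{p+1} > ⋯ > y_m > 0`.
Comparing the values of an affine root `a + k` at one point of `A` and one point of `w_{p,2}(A)`
pins it down to `k = 1`, `a = -(e_i + e_j)` with `i ≤ j ≤ p`, and conversely all of these separate
the two alcoves; there are `p(p+1)/2` unordered pairs `{i, j}` in `{1, …, p}`.
-/
section

variable {m : ℕ} (hm : 0 < m)

theorem simpleReflC_zero_apply (x : Fin m → ℝ) (j : Fin m) :
    simpleReflC m hm 0 x j = if (j : ℕ) = 0 then 1 - x ⟨0, hm⟩ else x j := by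
  change Function.update x _ _ j = _
  simp [Function.update_apply, Fin.ext_iff]

theorem simpleReflC_apply_of_lt {i : ℕ} (hi0 : i ≠ 0) (him : i < m) (x : Fin m → ℝ) (j : Fin m) :
    simpleReflC m hm i x j = x (Equiv.swap ⟨i - 1, by omega⟩ ⟨i, him⟩ j) := by
  simp [simpleReflC, hi0, him]

theorem prod_simpleReflC_apply {n : ℕ} (hn : n < m) (x : Fin m → ℝ) (j : Fin m) :
    ((List.range (n + 1)).map (simpleReflC m hm)).prod x j =
      if (j : ℕ) = 0 then 1 - x ⟨n, hn⟩ else if (j : ℕ) ≤ n then x ⟨j - 1, by omega⟩ else x j := by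
  induction n generalizing x with
  | zero => simp [simpleReflC_zero_apply]; grind
  | succ n ih =>
    rw [List.range_succ, List.map_append, List.prod_append, List.map_singleton,
      List.prod_singleton, Equiv.Perm.mul_apply, ih (by omega)]
    simp only [simpleReflC_apply_of_lt hm n.succ_ne_zero hn, Equiv.swap_apply_def,
      Fin.ext_iff]
    split_ifs <;> first | rfl | omega | (congr 1; ext; simp; omega)

theorem wp2_succ (p : ℕ) :
    wp2 m hm (p + 1) = ((List.range (p + 1)).map (simpleReflC m hm)).prod * wp2 m hm p := by
  simp [wp2, List.range_succ]

theorem wp2_apply {p : ℕ} (hp : p ≤ m) (x : Fin m → ℝ) (j : Fin m) :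
    wp2 m hm p x j = if (j : ℕ) < p then 1 - x ⟨p - 1 - j, by omega⟩ else x j := by
  induction p generalizing j with
  | zero => simp [wp2]
  | succ p ih =>
    rw [wp2_succ, Equiv.Perm.mul_apply, prod_simpleReflC_apply hm (by omega)]
    simp only [ih (by omega)]
    split_ifs <;> first | rfl | omega | (congr 2; ext; simp; omega)

theorem wp2_apply_wp2 {p : ℕ} (hp : p ≤ m) (x : Fin m → ℝ) : wp2 m hm p (wp2 m hm p x) = x := by
  funext j
  simp only [wp2_apply hm hp]
  split_ifs <;> first | rfl | omega | (rw [sub_sub_cancel]; congr 1; ext; simp; omega)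

theorem wp2_inv {p : ℕ} (hp : p ≤ m) : (wp2 m hm p)⁻¹ = wp2 m hm p :=
  inv_eq_of_mul_eq_one_right (Equiv.ext (wp2_apply_wp2 hm hp))

theorem wp2_apply_zero {p : ℕ} (hp : p ≤ m) :
    wp2 m hm p 0 = fun i : Fin m => if (i : ℕ) < p then (1 : ℝ) else 0 := by
  funext j
  simp [wp2_apply hm hp]

theorem alcoveC_nonempty : (alcoveC m).Nonempty := by
  refine ⟨fun i => 1 / ((i : ℕ) + 3), fun i j hij => ?_, fun i => by positivity, fun i => ?_⟩
  · have : ((i : ℕ) : ℝ) < (j : ℕ) := by exact_mod_cast hij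
    exact one_div_lt_one_div_of_lt (by positivity) (by linarith)
  · rw [div_lt_div_iff₀ (by positivity) two_pos]
    linarith [Nat.cast_nonneg (α := ℝ) i]

def wp2AlcoveBounds (m p : ℕ) : Set (Fin m → ℝ) :=
  {y | (∀ i j : Fin m, i < j → y j < y i) ∧ (∀ j, 0 < y j ∧ y j < 1) ∧
    (∀ j : Fin m, (j : ℕ) < p → 1 / 2 < y j) ∧ (∀ i j : Fin m, p ≤ (j : ℕ) → y i + y j < 1)}

theorem mapsTo_wp2_alcoveC {p : ℕ} (hp : p ≤ m) :
    Set.MapsTo (wp2 m hm p) (alcoveC m) (wp2AlcoveBounds m p) := by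
  rintro x ⟨hdec, hpos, hhalf⟩
  refine ⟨fun i j hij => ?_, fun j => ?_, fun j hj => ?_, fun i j hj => ?_⟩ <;>
    simp only [wp2_apply hm hp]
  · have hij' : (i : ℕ) < j := hij
    split_ifs
    · linarith [hdec ⟨p - 1 - j, by omega⟩ ⟨p - 1 - i, by omega⟩ (by simp; omega)]
    · omega
    · linarith [hhalf j, hhalf ⟨p - 1 - i, by omega⟩]
    · exact hdec i j hij
  · split_ifs
    · constructor <;> linarith [hpos ⟨p - 1 - j, by omega⟩, hhalf ⟨p - 1 - j, by omega⟩]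
    · constructor <;> linarith [hpos j, hhalf j]
  · rw [if_pos hj]
    linarith [hhalf ⟨p - 1 - j, by omega⟩]
  · rw [if_neg (show ¬(j : ℕ) < p by omega)]
    split_ifs
    · linarith [hdec ⟨p - 1 - i, by omega⟩ j (by simp [Fin.lt_def]; omega)]
    · linarith [hhalf i, hhalf j]

/-- Indexed by unordered pairs, so that `s(i, i)` gives the long root `-2eᵢ`. -/
def negSumRoot (m : ℕ) : Sym2 (Fin m) → (Fin m → ℝ) → ℝ :=
  Sym2.lift ⟨fun i j x => -x i - x j, fun i j => by funext x; ring⟩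

theorem negSumRoot_mk (i j : Fin m) : negSumRoot m s(i, j) = fun x => -x i - x j := rfl

theorem negSumRoot_mem_rootsC (z : Sym2 (Fin m)) : negSumRoot m z ∈ rootsC m := by
  induction z using Sym2.ind with
  | h i j =>
    rcases lt_trichotomy i j with hij | rfl | hji
    · exact Or.inl ⟨i, j, hij, by simp [negSumRoot_mk]⟩
    · exact Or.inr ⟨i, Or.inr (funext fun x => by simp [negSumRoot_mk]; ring)⟩
    · refine Or.inl ⟨j, i, hji, Or.inr (Or.inr (Or.inr (funext fun x => ?_)))⟩
      simp only [negSumRoot_mk]; ring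

/-- Evaluating at `k ↦ k` and `k ↦ k²` recovers `i + j` and `i² + j²`, hence `{i, j}`. -/
theorem negSumRoot_injective : Function.Injective (negSumRoot m) := by
  intro z w h
  induction z, w using Sym2.inductionOn₂ with
  | hf i j k l =>
    have hsum := congrFun h fun n => ((n : ℕ) : ℝ)
    have hsq := congrFun h fun n => ((n : ℕ) : ℝ) ^ 2
    simp only [negSumRoot_mk] at hsum hsq
    have hprod : (((i : ℕ) : ℝ) - k) * (((i : ℕ) : ℝ) - l) = 0 := by nlinarith
    have cast_inj (a b : Fin m) (h : ((a : ℕ) : ℝ) = b) : a = b := Fin.ext (by exact_mod_cast h)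
    rw [Sym2.eq_iff]
    rcases mul_eq_zero.1 hprod with hik | hil
    · obtain rfl := cast_inj _ _ (sub_eq_zero.1 hik)
      exact Or.inl ⟨rfl, cast_inj _ _ (by linarith)⟩
    · obtain rfl := cast_inj _ _ (sub_eq_zero.1 hil)
      exact Or.inr ⟨rfl, cast_inj _ _ (by linarith)⟩

variable {p : ℕ}

theorem negSumRoot_add_one_pos (z : Sym2 (Fin m)) {x : Fin m → ℝ} (hx : x ∈ alcoveC m) :
    0 < negSumRoot m z x + 1 := by
  induction z using Sym2.ind with
  | h i j => simp only [negSumRoot_mk]; linarith [hx.2.2 i, hx.2.2 j]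

theorem negSumRoot_add_one_neg {z : Sym2 (Fin m)}
    (hz : z ∈ ({i : Fin m | (i : ℕ) < p} : Finset (Fin m)).sym2) {y : Fin m → ℝ}
    (hy : y ∈ wp2AlcoveBounds m p) : negSumRoot m z y + 1 < 0 := by
  induction z using Sym2.ind with
  | h i j =>
    simp only [Finset.mk_mem_sym2_iff, Finset.mem_filter, Finset.mem_univ, true_and] at hz
    simp only [negSumRoot_mk]
    linarith [hy.2.2.1 i hz.1, hy.2.2.1 j hz.2]

theorem eq_negSumRoot_of_separates {a : (Fin m → ℝ) → ℝ} (ha : a ∈ rootsC m) {k : ℤ}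
    {x y : Fin m → ℝ} (hx : x ∈ alcoveC m) (hy : y ∈ wp2AlcoveBounds m p)
    (hxk : 0 < a x + k) (hyk : a y + k < 0) :
    k = 1 ∧ ∃ z ∈ ({i : Fin m | (i : ℕ) < p} : Finset (Fin m)).sym2, a = negSumRoot m z := by
  obtain ⟨hxdec, hxpos, hxhalf⟩ := hx
  obtain ⟨hydec, hybd, -, hysum⟩ := hy
  -- In each case the two inequalities trap `k` strictly between two consecutive integers,
  -- except for `-(eᵢ + eⱼ)` and `-2eᵢ`, where they only allow `k = 1`.
  rcases ha with ⟨i, j, hij, rfl | rfl | rfl | rfl⟩ | ⟨i, rfl | rfl⟩ <;> dsimp only at hxk hyk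
  · have h : (-1 : ℝ) < k ∧ (k : ℝ) < 0 :=
      ⟨by linarith [hxhalf i, hxpos j], by linarith [hydec i j hij]⟩
    norm_cast at h; omega
  · have h : (-1 : ℝ) < k ∧ (k : ℝ) < 0 :=
      ⟨by linarith [hxhalf i, hxhalf j], by linarith [hybd i, hybd j]⟩
    norm_cast at h; omega
  · have h : (0 : ℝ) < k ∧ (k : ℝ) < 1 :=
      ⟨by linarith [hxdec i j hij], by linarith [hybd i, hybd j]⟩
    norm_cast at h; omega
  · have h : (0 : ℝ) < k ∧ (k : ℝ) < 2 :=
      ⟨by linarith [hxpos i, hxpos j], by linarith [hybd i, hybd j]⟩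
    norm_cast at h
    obtain rfl : k = 1 := by omega
    push_cast at hyk
    have hjp : (j : ℕ) < p := by
      by_contra! hpj
      linarith [hysum i j hpj]
    refine ⟨rfl, s(i, j), ?_, rfl⟩
    simp only [Finset.mk_mem_sym2_iff, Finset.mem_filter, Finset.mem_univ, true_and]
    exact ⟨lt_trans hij hjp, hjp⟩
  · have h : (-1 : ℝ) < k ∧ (k : ℝ) < 0 :=
      ⟨by linarith [hxhalf i], by linarith [hybd i]⟩
    norm_cast at h; omega
  · have h : (0 : ℝ) < k ∧ (k : ℝ) < 2 :=
      ⟨by linarith [hxpos i], by linarith [hybd i]⟩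
    norm_cast at h
    obtain rfl : k = 1 := by omega
    push_cast at hyk
    have hip : (i : ℕ) < p := by
      by_contra! hpi
      linarith [hysum i i hpi]
    refine ⟨rfl, s(i, i), by simp [hip], funext fun x => ?_⟩
    simp only [negSumRoot_mk]; ring

/-- The length of `w` is the cardinality of this set. -/
def inversionSetC (m : ℕ) (w : Equiv.Perm (Fin m → ℝ)) : Set (((Fin m → ℝ) → ℝ) × ℤ) :=
  {q | q.1 ∈ rootsC m ∧ (∀ x ∈ alcoveC m, 0 < q.1 x + (q.2 : ℝ)) ∧
    (∀ x ∈ alcoveC m, q.1 (w⁻¹ x) + (q.2 : ℝ) < 0)}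

theorem inversionSetC_wp2 (hp : p ≤ m) :
    inversionSetC m (wp2 m hm p) = (fun z => (negSumRoot m z, (1 : ℤ))) ''
      ↑({i : Fin m | (i : ℕ) < p} : Finset (Fin m)).sym2 := by
  ext ⟨a, k⟩
  simp only [inversionSetC, wp2_inv hm hp, Set.mem_ofPred_eq, Set.mem_image, Finset.mem_coe,
    Prod.mk.injEq]
  constructor
  · rintro ⟨ha, hpos, hneg⟩
    obtain ⟨x, hx⟩ := alcoveC_nonempty (m := m)
    obtain ⟨rfl, z, hz, rfl⟩ :=
      eq_negSumRoot_of_separates ha hx (mapsTo_wp2_alcoveC hm hp hx) (hpos x hx) (hneg x hx)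
    exact ⟨z, hz, rfl, rfl⟩
  · rintro ⟨z, hz, rfl, rfl⟩
    exact ⟨negSumRoot_mem_rootsC z, fun x hx => by exact_mod_cast negSumRoot_add_one_pos z hx,
      fun x hx => by exact_mod_cast negSumRoot_add_one_neg hz (mapsTo_wp2_alcoveC hm hp hx)⟩

theorem ncard_inversionSetC_wp2 (hp : p ≤ m) :
    (inversionSetC m (wp2 m hm p)).ncard = p * (p + 1) / 2 := by
  have hinj : Function.Injective fun z => (negSumRoot m z, (1 : ℤ)) :=
    fun z w h => negSumRoot_injective (congrArg Prod.fst h)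
  rw [inversionSetC_wp2 hm hp, Set.ncard_image_of_injective _ hinj, Set.ncard_coe_finset,
    Finset.card_sym2, Fin.card_filter_val_lt, min_eq_right hp, Nat.choose_two_right,
    Nat.add_sub_cancel, mul_comm]

end

/-- In the affine Weyl group `W_aff = ℤ^m ⋊ (S_m ⋊ {±1}^m)` of type
`C_m`, for `0 ≤ p ≤ m` the element `w_{p,2} = ∏_{i=1}^{p} (s_0 s_1 ⋯ s_{i-1})` has length
`p(p+1)/2` (its length being the number of affine roots positive on the fundamental
alcove made negative by it), and its image under `W_aff → W_aff/W₀` is the class of the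
coweight `μ_p = (1^{(p)}, 0^{(m-p)})` (equivalently, `w_{p,2}(0) = μ_p`, `W₀` being the
stabilizer of the origin). -/
theorem wp2_length_and_translation_class (m p : ℕ) (hm : 0 < m) (hp : p ≤ m) :
    Set.ncard {q : ((Fin m → ℝ) → ℝ) × ℤ |
        q.1 ∈ rootsC m ∧
        (∀ x ∈ alcoveC m, 0 < q.1 x + (q.2 : ℝ)) ∧
        (∀ x ∈ alcoveC m, q.1 ((wp2 m hm p)⁻¹ x) + (q.2 : ℝ) < 0)} = p * (p + 1) / 2 ∧
      (wp2 m hm p) 0 = (fun i : Fin m => if (i : ℕ) < p then (1 : ℝ) else 0) :=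
  ⟨ncard_inversionSetC_wp2 hm hp, wp2_apply_zero hm hp⟩
end

section
/- Let (W,S) be the affine Weyl group of a reduced root system acting on the affine roots Σ, with fundamental alcove C, and let F', F be facets in the closure of C. For w ∈ W, the length of the representative {}_{F'}w^F (the maximal-length element among minimal coset representatives (vw)^F for v ∈ W_{F'}) equals the number of affine roots α ∈ Σ \ Σ(F) with α(C) > 0 and w(α)(F') ≤ 0. -/
namespace AffineWeyl

variable {V : Type*} [AddCommGroup V] [Module ℝ V]

/-- The pair `(a, k)` stands for the affine function `a + k` on `V`. -/
def eval (p : Module.Dual ℝ V × ℤ) (x : V) : ℝ := p.1 x + p.2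

theorem eval_injective : Function.Injective (eval : Module.Dual ℝ V × ℤ → V → ℝ) := by
  intro p q h
  have hk : p.2 = q.2 := by exact_mod_cast (by simpa [eval] using congrFun h 0 : (p.2 : ℝ) = q.2)
  refine Prod.ext (LinearMap.ext fun x => ?_) hk
  have := congrFun h x
  simp only [eval, hk] at this
  linarith

theorem eval_neg (p : Module.Dual ℝ V × ℤ) (x : V) : eval (-p) x = -eval p x := by
  simp only [eval, Prod.fst_neg, Prod.snd_neg, LinearMap.neg_apply, Int.cast_neg]
  ring

theorem eval_two_smul_sub (p : Module.Dual ℝ V × ℤ) (x y : V) :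
    eval p ((2 : ℝ) • x - y) = 2 * eval p x - eval p y := by
  simp only [eval, map_sub, map_smul, smul_eq_mul]
  ring

def PosOn (S : Set V) (p : Module.Dual ℝ V × ℤ) : Prop := ∀ x ∈ S, 0 < eval p x

def NegOn (S : Set V) (p : Module.Dual ℝ V × ℤ) : Prop := ∀ x ∈ S, eval p x < 0

def VanishOn (S : Set V) (p : Module.Dual ℝ V × ℤ) : Prop := ∀ x ∈ S, eval p x = 0

/-- The transport `x ↦ p (g⁻¹ x)` of `p` by `g`, when this is again an affine function
(junk value `p` otherwise). -/
noncomputable def act (g : Equiv.Perm V) (p : Module.Dual ℝ V × ℤ) : Module.Dual ℝ V × ℤ :=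
  open Classical in
  if h : ∃ q, eval q = fun x => eval p (g⁻¹ x) then h.choose else p

theorem act_eq {g : Equiv.Perm V} {p q : Module.Dual ℝ V × ℤ}
    (h : eval q = fun x => eval p (g⁻¹ x)) : act g p = q := by
  have hex : ∃ q, eval q = fun x => eval p (g⁻¹ x) := ⟨q, h⟩
  rw [act, dif_pos hex]
  exact eval_injective (hex.choose_spec.trans h.symm)

theorem sum_pos_of_reflection {T : Finset (Module.Dual ℝ V × ℤ)} {β : Module.Dual ℝ V × ℤ}
    (hβ : β ∈ T) {c : V} (hc : β.1 c = 2) {x₀ : V} (hpos : ∀ γ ∈ T, 0 < eval γ x₀)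
    (σ : Module.Dual ℝ V × ℤ → Module.Dual ℝ V × ℤ)
    (hσ : ∀ γ ∈ T, ∀ x, eval (σ γ) x = eval γ x - eval β x * γ.1 c)
    (hσσ : ∀ γ ∈ T, σ (σ γ) = γ) (hmaps : ∀ γ ∈ T, 0 < eval (σ γ) x₀ → σ γ ∈ T) :
    0 < ∑ γ ∈ T, γ.1 c := by
  classical
  have hσc : ∀ γ ∈ T, (σ γ).1 c = -γ.1 c := by
    intro γ hγ
    have h₁ := hσ γ hγ (x₀ + c)
    have h₀ := hσ γ hγ x₀
    simp only [eval, map_add, hc] at h₁ h₀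
    linear_combination h₁ - h₀
  rw [← Finset.sum_filter_add_sum_filter_not T fun γ => eval (σ γ) x₀ ≤ 0]
  -- `σ` pairs off the roots it keeps positive, with opposite values of `γ ↦ γ.1 c`
  have hkept : ∑ γ ∈ T with ¬eval (σ γ) x₀ ≤ 0, γ.1 c = 0 := by
    refine Finset.sum_involution (fun γ _ => σ γ) (fun γ hγ => ?_) (fun γ hγ hne => ?_)
      (fun γ hγ => ?_) (fun γ hγ => hσσ γ (Finset.mem_filter.1 hγ).1)
    · rw [hσc γ (Finset.mem_filter.1 hγ).1, add_neg_cancel]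
    · intro hfix
      have := hσc γ (Finset.mem_filter.1 hγ).1
      rw [hfix] at this
      exact hne (by linarith)
    · obtain ⟨hγT, hγ⟩ := Finset.mem_filter.1 hγ
      refine Finset.mem_filter.2 ⟨hmaps γ hγT (not_le.1 hγ), ?_⟩
      rw [hσσ γ hγT]
      exact (hpos γ hγT).not_ge
  rw [hkept, add_zero]
  refine Finset.sum_pos (fun γ hγ => ?_) ⟨β, Finset.mem_filter.2 ⟨hβ, ?_⟩⟩
  · obtain ⟨hγT, hγ⟩ := Finset.mem_filter.1 hγ
    rw [hσ γ hγT] at hγ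
    have := hpos γ hγT
    have := hpos β hβ
    nlinarith
  · rw [hσ β hβ, hc]
    linarith [hpos β hβ]

/-- `pos` plays the role of the positive roots `Σ₀⁺`, `coroot a` of the coroot of `a`, and
`refl a k` is the reflection in the affine hyperplane `a + k = 0`. -/
structure RootDatum (V : Type*) [AddCommGroup V] [Module ℝ V] where
  pos : Finset (Module.Dual ℝ V)
  coroot : Module.Dual ℝ V → V
  refl : Module.Dual ℝ V → ℤ → Equiv.Perm V
  apply_coroot_self : ∀ a ∈ pos, a (coroot a) = 2
  apply_coroot_int : ∀ a ∈ pos, ∀ b : Module.Dual ℝ V, (b ∈ pos ∨ -b ∈ pos) →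
    ∃ n : ℤ, b (coroot a) = n
  reflect_mem : ∀ a ∈ pos, ∀ b : Module.Dual ℝ V, (b ∈ pos ∨ -b ∈ pos) →
    ∃ c : Module.Dual ℝ V, (c ∈ pos ∨ -c ∈ pos) ∧ ∀ x : V, b x - a x * b (coroot a) = c x
  refl_apply : ∀ a k (x : V), refl a k x = x - (a x + (k : ℝ)) • coroot a

namespace RootDatum

variable (Φ : RootDatum V)

def IsRoot (p : Module.Dual ℝ V × ℤ) : Prop := p.1 ∈ Φ.pos ∨ -p.1 ∈ Φ.pos

def weylGroup : Subgroup (Equiv.Perm V) :=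
  Subgroup.closure {σ | ∃ a ∈ Φ.pos, ∃ k : ℤ, σ = Φ.refl a k}

def parabolic (K : Set V) : Subgroup (Equiv.Perm V) :=
  Subgroup.closure {σ | ∃ a ∈ Φ.pos, ∃ k : ℤ, (∀ x ∈ K, a x + (k : ℝ) = 0) ∧ σ = Φ.refl a k}

def inversions (C : Set V) (g : Equiv.Perm V) : Set (Module.Dual ℝ V × ℤ) :=
  {p | Φ.IsRoot p ∧ PosOn C p ∧ ∀ x ∈ C, eval p (g⁻¹ x) < 0}

def relInversions (C F F' : Set V) (w : Equiv.Perm V) : Set (Module.Dual ℝ V × ℤ) :=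
  {p | Φ.IsRoot p ∧ ¬VanishOn F p ∧ PosOn C p ∧ ∀ x ∈ F', eval p (w⁻¹ x) ≤ 0}

theorem affineLength_eq (C : Set V) (g : Equiv.Perm V) :
    affineLength Φ.pos C g = (Φ.inversions C g).ncard :=
  rfl

variable {Φ}

theorem isRoot_neg {p : Module.Dual ℝ V × ℤ} : Φ.IsRoot (-p) ↔ Φ.IsRoot p := by
  simp only [IsRoot, Prod.fst_neg, neg_neg, or_comm]

theorem finite_setOf_isRoot_nonneg_nonpos (x₀ x₁ : V) :
    {p | Φ.IsRoot p ∧ 0 ≤ eval p x₀ ∧ eval p x₁ ≤ 0}.Finite := by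
  have hlin : {a : Module.Dual ℝ V | a ∈ Φ.pos ∨ -a ∈ Φ.pos}.Finite :=
    Φ.pos.finite_toSet.union (Φ.pos.finite_toSet.preimage neg_injective.injOn)
  refine (hlin.biUnion fun a _ =>
    (Set.finite_singleton a).prod (Set.finite_Icc ⌊-a x₀⌋ ⌈-a x₁⌉)).subset ?_
  rintro ⟨a, k⟩ ⟨hp, h₀, h₁⟩
  simp only [eval] at h₀ h₁
  refine Set.mem_biUnion hp ⟨rfl, Int.floor_le_iff.2 ?_, Int.le_ceil_iff.2 ?_⟩ <;> linarith

theorem finite_vanishOn {K : Set V} (hK : K.Nonempty) :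
    {p | Φ.IsRoot p ∧ VanishOn K p}.Finite := by
  obtain ⟨x, hx⟩ := hK
  refine (finite_setOf_isRoot_nonneg_nonpos x x).subset fun p ⟨hp, hpK⟩ => ⟨hp, ?_, ?_⟩ <;>
    simp [hpK x hx]

theorem refl_mul_self {a : Module.Dual ℝ V} (ha : a ∈ Φ.pos) (k : ℤ) :
    Φ.refl a k * Φ.refl a k = 1 := by
  ext x
  simp only [Equiv.Perm.mul_apply, Φ.refl_apply, map_sub, map_smul, smul_eq_mul,
    Φ.apply_coroot_self a ha, Equiv.Perm.one_apply]
  module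

theorem refl_inv {a : Module.Dual ℝ V} (ha : a ∈ Φ.pos) (k : ℤ) :
    (Φ.refl a k)⁻¹ = Φ.refl a k :=
  inv_eq_of_mul_eq_one_right (refl_mul_self ha k)

theorem exists_isRoot_eval_comp_refl {a : Module.Dual ℝ V} (ha : a ∈ Φ.pos) (k : ℤ)
    {p : Module.Dual ℝ V × ℤ} (hp : Φ.IsRoot p) :
    ∃ q, Φ.IsRoot q ∧ eval q = fun x => eval p (Φ.refl a k x) := by
  obtain ⟨n, hn⟩ := Φ.apply_coroot_int a ha p.1 hp
  obtain ⟨c, hc, hcp⟩ := Φ.reflect_mem a ha p.1 hp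
  refine ⟨(c, p.2 - k * n), hc, funext fun x => ?_⟩
  simp only [eval, Φ.refl_apply, map_sub, map_smul, smul_eq_mul, hn, ← hcp x]
  push_cast
  ring

theorem exists_isRoot_eval_comp {g : Equiv.Perm V} (hg : g ∈ Φ.weylGroup)
    {p : Module.Dual ℝ V × ℤ} (hp : Φ.IsRoot p) :
    ∃ q, Φ.IsRoot q ∧ eval q = fun x => eval p (g⁻¹ x) := by
  induction hg using Subgroup.closure_induction'' generalizing p with
  | mem σ hσ =>
    obtain ⟨a, ha, k, rfl⟩ := hσ
    rw [refl_inv ha]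
    exact exists_isRoot_eval_comp_refl ha k hp
  | inv_mem σ hσ =>
    obtain ⟨a, ha, k, rfl⟩ := hσ
    rw [inv_inv]
    exact exists_isRoot_eval_comp_refl ha k hp
  | one => exact ⟨p, hp, rfl⟩
  | mul g h _ _ ihg ihh =>
    obtain ⟨q₁, hq₁, hq₁p⟩ := ihh hp
    obtain ⟨q₂, hq₂, hq₂q₁⟩ := ihg hq₁
    exact ⟨q₂, hq₂, by rw [hq₂q₁, hq₁p, mul_inv_rev]; rfl⟩

section Action

variable {g : Equiv.Perm V} (hg : g ∈ Φ.weylGroup) {p : Module.Dual ℝ V × ℤ} (hp : Φ.IsRoot p)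
include hg hp

theorem isRoot_act : Φ.IsRoot (act g p) := by
  obtain ⟨q, hq, hqp⟩ := exists_isRoot_eval_comp hg hp
  rwa [act_eq hqp]

theorem eval_act (x : V) : eval (act g p) x = eval p (g⁻¹ x) := by
  obtain ⟨q, -, hqp⟩ := exists_isRoot_eval_comp hg hp
  rw [act_eq hqp, hqp]

theorem act_inv_act : act g⁻¹ (act g p) = p :=
  act_eq (funext fun x => by simp [eval_act hg hp])

theorem act_act_inv : act g (act g⁻¹ p) = p := by
  simpa using act_inv_act (inv_mem hg) hp

end Action

theorem act_injOn {g : Equiv.Perm V} (hg : g ∈ Φ.weylGroup) :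
    Set.InjOn (act g) {p | Φ.IsRoot p} := fun p hp q hq hpq => by
  rw [← act_inv_act hg hp, hpq, act_inv_act hg hq]

theorem parabolic_le_weylGroup (K : Set V) : Φ.parabolic K ≤ Φ.weylGroup :=
  Subgroup.closure_mono fun _ ⟨a, ha, k, _, hσ⟩ => ⟨a, ha, k, hσ⟩

theorem parabolic_le_fixingSubgroup (K : Set V) :
    Φ.parabolic K ≤ fixingSubgroup (Equiv.Perm V) K := by
  refine Subgroup.closure_le _ |>.2 ?_
  rintro _ ⟨a, -, k, hK, rfl⟩
  exact (mem_fixingSubgroup_iff _).2 fun x hx => by simp [Φ.refl_apply, hK x hx]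

theorem apply_eq_self_of_mem_parabolic {K : Set V} {u : Equiv.Perm V} (hu : u ∈ Φ.parabolic K)
    {x : V} (hx : x ∈ K) : u x = x :=
  (mem_fixingSubgroup_iff _).1 (parabolic_le_fixingSubgroup K hu) x hx

theorem eval_act_of_mem_parabolic {K : Set V} {u : Equiv.Perm V} (hu : u ∈ Φ.parabolic K)
    {p : Module.Dual ℝ V × ℤ} (hp : Φ.IsRoot p) {x : V} (hx : x ∈ K) :
    eval (act u p) x = eval p x := by
  rw [eval_act (parabolic_le_weylGroup K hu) hp,
    apply_eq_self_of_mem_parabolic (inv_mem hu) hx]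

structure IsAlcove (Φ : RootDatum V) (C : Set V) : Prop where
  nonempty : C.Nonempty
  bounds : ∀ a ∈ Φ.pos, ∀ x ∈ C, 0 < a x ∧ a x < 1

structure IsFacet (Φ : RootDatum V) (C F : Set V) : Prop where
  nonempty : F.Nonempty
  nonneg_of_posOn : ∀ p, Φ.IsRoot p → PosOn C p → ∀ x ∈ F, 0 ≤ eval p x
  trichotomy : ∀ p, Φ.IsRoot p → VanishOn F p ∨ PosOn F p ∨ NegOn F p

variable {C F K : Set V} {p : Module.Dual ℝ V × ℤ}

theorem IsAlcove.posOn_or_negOn (hC : Φ.IsAlcove C) (hp : Φ.IsRoot p) :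
    PosOn C p ∨ NegOn C p := by
  have key : ∀ q : Module.Dual ℝ V × ℤ, q.1 ∈ Φ.pos → PosOn C q ∨ NegOn C q := by
    intro q hq
    rcases le_or_gt 0 q.2 with hk | hk
    · have hk' : (0 : ℝ) ≤ q.2 := by exact_mod_cast hk
      exact .inl fun x hx => by have := (hC.bounds _ hq x hx).1; simp only [eval]; linarith
    · have hk' : (q.2 : ℝ) ≤ -1 := by exact_mod_cast (by omega : q.2 ≤ -1)
      exact .inr fun x hx => by have := (hC.bounds _ hq x hx).2; simp only [eval]; linarith
  rcases hp with hp | hp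
  · exact key p hp
  · refine (key (-p) hp).symm.imp (fun h x hx => ?_) (fun h x hx => ?_) <;>
      simpa [eval_neg] using h x hx

theorem IsAlcove.negOn_of_not_posOn (hC : Φ.IsAlcove C) (hp : Φ.IsRoot p) (h : ¬PosOn C p) :
    NegOn C p :=
  (hC.posOn_or_negOn hp).resolve_left h

theorem IsAlcove.eval_ne_zero (hC : Φ.IsAlcove C) (hp : Φ.IsRoot p) {x : V} (hx : x ∈ C) :
    eval p x ≠ 0 :=
  (hC.posOn_or_negOn hp).elim (fun h => (h x hx).ne') (fun h => (h x hx).ne)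

theorem IsFacet.nonpos_of_negOn (hF : Φ.IsFacet C F) (hp : Φ.IsRoot p) (h : NegOn C p) :
    ∀ x ∈ F, eval p x ≤ 0 := fun x hx => by
  have := hF.nonneg_of_posOn (-p) (isRoot_neg.2 hp) (fun y hy => by simpa [eval_neg] using h y hy)
    x hx
  simpa [eval_neg] using this

theorem IsFacet.posOn_iff (hC : Φ.IsAlcove C) (hF : Φ.IsFacet C F) (hp : Φ.IsRoot p)
    (hpF : ¬VanishOn F p) : PosOn C p ↔ PosOn F p := by
  obtain ⟨z, hz⟩ := hF.nonempty
  constructor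
  · intro hpC
    rcases hF.trichotomy p hp with h | h | h
    · exact absurd h hpF
    · exact h
    · exact absurd (hF.nonneg_of_posOn p hp hpC z hz) (h z hz).not_ge
  · intro hpos
    by_contra hpC
    exact (hF.nonpos_of_negOn hp (hC.negOn_of_not_posOn hp hpC) z hz).not_gt (hpos z hz)

theorem exists_refl_eq {β : Module.Dual ℝ V × ℤ} (hβ : Φ.IsRoot β) :
    ∃ a ∈ Φ.pos, ∃ k : ℤ, ∃ c : V, β.1 c = 2 ∧ (∀ x, Φ.refl a k x = x - eval β x • c) ∧
      ∀ x, eval β x = 0 → a x + (k : ℝ) = 0 := by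
  rcases hβ with hβ | hβ
  · exact ⟨β.1, hβ, β.2, Φ.coroot β.1, Φ.apply_coroot_self _ hβ, fun x => Φ.refl_apply _ _ x,
      fun _ h => h⟩
  · refine ⟨-β.1, hβ, -β.2, -Φ.coroot (-β.1), ?_, fun x => ?_, fun x h => ?_⟩
    · simpa using Φ.apply_coroot_self _ hβ
    · rw [Φ.refl_apply, eval, smul_neg, ← neg_smul]
      push_cast
      simp only [LinearMap.neg_apply, neg_add]
    · simp only [eval] at h
      simp only [LinearMap.neg_apply, Int.cast_neg]
      linarith

theorem finite_image_sum_eval (hK : K.Nonempty) (T : Finset (Module.Dual ℝ V × ℤ))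
    (hT : ∀ γ ∈ T, Φ.IsRoot γ ∧ VanishOn K γ) (y : V) :
    ((fun u => ∑ γ ∈ T, eval γ (u⁻¹ y)) '' (Φ.parabolic K : Set (Equiv.Perm V))).Finite := by
  have := (finite_vanishOn (Φ := Φ) hK).to_subtype
  refine (Set.finite_range fun f : T → {p | Φ.IsRoot p ∧ VanishOn K p} =>
    ∑ γ : T, eval (f γ : Module.Dual ℝ V × ℤ) y).subset ?_
  rintro _ ⟨u, hu, rfl⟩
  have hW := parabolic_le_weylGroup K hu
  refine ⟨fun γ => ⟨act u γ, isRoot_act hW (hT γ γ.2).1, fun x hx => ?_⟩, ?_⟩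
  · rw [eval_act_of_mem_parabolic hu (hT γ γ.2).1 hx]
    exact (hT γ γ.2).2 x hx
  · simp only [eval_act hW (hT _ (Subtype.prop _)).1]
    exact Finset.sum_coe_sort T fun γ => eval γ (u⁻¹ y)

theorem exists_sum_eval_lt (hC : Φ.IsAlcove C) {T : Finset (Module.Dual ℝ V × ℤ)}
    (hT : ∀ γ, γ ∈ T ↔ Φ.IsRoot γ ∧ VanishOn K γ ∧ PosOn C γ) {β : Module.Dual ℝ V × ℤ}
    (hβ : β ∈ T) {z : V} (hz : eval β z < 0) :
    ∃ s ∈ Φ.parabolic K, ∑ γ ∈ T, eval γ z < ∑ γ ∈ T, eval γ (s z) := by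
  obtain ⟨hβroot, hβK, hβC⟩ := (hT β).1 hβ
  obtain ⟨a, ha, k, c, hc, hs, hsK⟩ := exists_refl_eq hβroot
  have hsW : Φ.refl a k ∈ Φ.parabolic K :=
    Subgroup.subset_closure ⟨a, ha, k, fun x hx => hsK x (hβK x hx), rfl⟩
  have hγs : ∀ γ x, eval γ (Φ.refl a k x) = eval γ x - eval β x * γ.1 c := fun γ x => by
    simp only [eval, hs, map_sub, map_smul, smul_eq_mul]
    ring
  obtain ⟨x₀, hx₀⟩ := hC.nonempty
  have hsum : 0 < ∑ γ ∈ T, γ.1 c := by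
    have hsW' := parabolic_le_weylGroup K hsW
    have hact : ∀ γ ∈ T, ∀ x, eval (act (Φ.refl a k) γ) x = eval γ x - eval β x * γ.1 c :=
      fun γ hγ x => by rw [eval_act hsW' ((hT γ).1 hγ).1, refl_inv ha, hγs]
    refine sum_pos_of_reflection hβ hc (fun γ hγ => ((hT γ).1 hγ).2.2 x₀ hx₀) _ hact
      (fun γ hγ => by simpa [refl_inv ha] using act_inv_act hsW' ((hT γ).1 hγ).1)
      (fun γ hγ hpos => ?_)
    obtain ⟨hγroot, hγK, -⟩ := (hT γ).1 hγ
    have hroot := isRoot_act hsW' hγroot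
    refine (hT _).2 ⟨hroot, fun x hx => ?_, ?_⟩
    · rw [eval_act_of_mem_parabolic hsW hγroot hx, hγK x hx]
    · exact (hC.posOn_or_negOn hroot).resolve_right fun hneg => (hneg x₀ hx₀).not_gt hpos
  refine ⟨Φ.refl a k, hsW, ?_⟩
  simp only [hγs, Finset.sum_sub_distrib, ← Finset.mul_sum]
  nlinarith

/-- Maximizing `u ↦ ∑ γ (u⁻¹ y)` over the positive roots `γ` vanishing on `K`: at a maximum
no such root is negative at `u⁻¹ y`, since reflecting in it would increase the sum. -/
theorem exists_mem_parabolic_forall_pos (hC : Φ.IsAlcove C) (hK : K.Nonempty) {y : V}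
    (hy : ∀ p, Φ.IsRoot p → VanishOn K p → eval p y ≠ 0) :
    ∃ u ∈ Φ.parabolic K, ∀ p, Φ.IsRoot p → VanishOn K p → PosOn C p → 0 < eval p (u⁻¹ y) := by
  obtain ⟨T, hT⟩ : ∃ T : Finset (Module.Dual ℝ V × ℤ),
      ∀ γ, γ ∈ T ↔ Φ.IsRoot γ ∧ VanishOn K γ ∧ PosOn C γ :=
    ⟨((finite_vanishOn hK).subset (t := {γ | Φ.IsRoot γ ∧ VanishOn K γ ∧ PosOn C γ})
      fun _ hγ => ⟨hγ.1, hγ.2.1⟩).toFinset, fun γ => Set.Finite.mem_toFinset _⟩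
  obtain ⟨_, ⟨u₀, hu₀, rfl⟩, hmax⟩ := Set.exists_max_image _ id
    (finite_image_sum_eval hK T (fun γ hγ => ⟨((hT γ).1 hγ).1, ((hT γ).1 hγ).2.1⟩) y)
    ⟨_, 1, one_mem _, rfl⟩
  refine ⟨u₀, hu₀, fun β hβ hβK hβC => lt_of_not_ge fun hle => ?_⟩
  have hW := parabolic_le_weylGroup K hu₀
  have hne : eval β (u₀⁻¹ y) ≠ 0 := by
    rw [← eval_act hW hβ]
    exact hy _ (isRoot_act hW hβ) fun x hx => by
      rw [eval_act_of_mem_parabolic hu₀ hβ hx, hβK x hx]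
  obtain ⟨s, hs, hlt⟩ := exists_sum_eval_lt hC hT ((hT β).2 ⟨hβ, hβK, hβC⟩) (hle.lt_of_ne hne)
  have := hmax _ ⟨u₀ * s⁻¹, mul_mem hu₀ (inv_mem hs), rfl⟩
  simp only [id, mul_inv_rev, inv_inv, Equiv.Perm.mul_apply] at this
  exact this.not_gt hlt

theorem finite_inversions (hC : Φ.IsAlcove C) (g : Equiv.Perm V) : (Φ.inversions C g).Finite := by
  obtain ⟨x₀, hx₀⟩ := hC.nonempty
  exact (finite_setOf_isRoot_nonneg_nonpos x₀ (g⁻¹ x₀)).subset fun p ⟨hp, hpC, hpg⟩ =>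
    ⟨hp, (hpC x₀ hx₀).le, (hpg x₀ hx₀).le⟩

variable {g u : Equiv.Perm V}

theorem act_mem_inversions_diff_iff (hC : Φ.IsAlcove C) (hF : Φ.IsFacet C F)
    (hu : u ∈ Φ.parabolic F) (hp : Φ.IsRoot p) :
    act u p ∈ Φ.inversions C g \ {q | VanishOn F q} ↔
      p ∈ Φ.inversions C (g * u) \ {q | VanishOn F q} := by
  have huW := parabolic_le_weylGroup F hu
  have hq := isRoot_act huW hp
  have hvan : VanishOn F (act u p) ↔ VanishOn F p :=
    forall₂_congr fun x hx => by rw [eval_act_of_mem_parabolic hu hp hx]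
  simp only [inversions, Set.mem_sdiff, Set.mem_ofPred_eq, hvan, hp, hq, true_and,
    mul_inv_rev, Equiv.Perm.mul_apply, ← eval_act huW hp]
  refine and_congr_left fun hpF => and_congr_left fun _ => ?_
  rw [hF.posOn_iff hC hq (hvan.not.2 hpF), hF.posOn_iff hC hp hpF]
  exact forall₂_congr fun x hx => by rw [eval_act_of_mem_parabolic hu hp hx]

theorem ncard_inversions_mul (hC : Φ.IsAlcove C) (hF : Φ.IsFacet C F)
    (hu : u ∈ Φ.parabolic F) :
    (Φ.inversions C (g * u)).ncard = (Φ.inversions C (g * u) ∩ {q | VanishOn F q}).ncard +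
      (Φ.inversions C g \ {q | VanishOn F q}).ncard := by
  rw [← Set.ncard_inter_add_ncard_sdiff_eq_ncard _ {q | VanishOn F q} (finite_inversions hC _)]
  congr 1
  have huW := parabolic_le_weylGroup F hu
  refine Set.BijOn.ncard_eq ⟨fun p hp => (act_mem_inversions_diff_iff hC hF hu hp.1.1).2 hp,
    (act_injOn huW).mono fun p hp => hp.1.1, fun q hq => ?_⟩
  have hr := isRoot_act (inv_mem huW) hq.1.1
  refine ⟨act u⁻¹ q, (act_mem_inversions_diff_iff hC hF hu hr).1 ?_, act_act_inv huW hq.1.1⟩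
  rwa [act_act_inv huW hq.1.1]

theorem ncard_diff_le_affineLength (hC : Φ.IsAlcove C) (hF : Φ.IsFacet C F)
    (hu : u ∈ Φ.parabolic F) :
    (Φ.inversions C g \ {q | VanishOn F q}).ncard ≤ affineLength Φ.pos C (g * u) := by
  rw [affineLength_eq, ncard_inversions_mul hC hF hu]
  exact Nat.le_add_left _ _

theorem exists_affineLength_mul_eq (hC : Φ.IsAlcove C) (hF : Φ.IsFacet C F)
    (hg : g ∈ Φ.weylGroup) : ∃ u ∈ Φ.parabolic F,
      affineLength Φ.pos C (g * u) = (Φ.inversions C g \ {q | VanishOn F q}).ncard := by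
  obtain ⟨x₀, hx₀⟩ := hC.nonempty
  obtain ⟨u, hu, hpos⟩ := exists_mem_parabolic_forall_pos hC hF.nonempty (y := g⁻¹ x₀)
    fun p hp _ => by rw [← eval_act hg hp]; exact hC.eval_ne_zero (isRoot_act hg hp) hx₀
  have hempty : Φ.inversions C (g * u) ∩ {q | VanishOn F q} = ∅ :=
    Set.eq_empty_of_forall_notMem fun p ⟨⟨hp, hpC, hneg⟩, hpF⟩ =>
      (hneg x₀ hx₀).not_gt <| by
        simpa only [mul_inv_rev, Equiv.Perm.mul_apply] using hpos p hp hpF hpC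
  refine ⟨u, hu, ?_⟩
  rw [affineLength_eq, ncard_inversions_mul hC hF hu, hempty, Set.ncard_empty, zero_add]

variable {F' : Set V} {w : Equiv.Perm V}

theorem finite_relInversions (hC : Φ.IsAlcove C) (hF' : F'.Nonempty) :
    (Φ.relInversions C F F' w).Finite := by
  obtain ⟨x₀, hx₀⟩ := hC.nonempty
  obtain ⟨z, hz⟩ := hF'
  exact (finite_setOf_isRoot_nonneg_nonpos x₀ (w⁻¹ z)).subset fun p ⟨hp, _, hpC, hpw⟩ =>
    ⟨hp, (hpC x₀ hx₀).le, hpw z hz⟩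

theorem inversions_diff_subset_relInversions (hF' : Φ.IsFacet C F') (hw : w ∈ Φ.weylGroup)
    {v : Equiv.Perm V} (hv : v ∈ Φ.parabolic F') :
    Φ.inversions C (v * w) \ {q | VanishOn F q} ⊆ Φ.relInversions C F F' w := by
  rintro p ⟨⟨hp, hpC, hneg⟩, hpF⟩
  have hvw := mul_mem (parabolic_le_weylGroup F' hv) hw
  refine ⟨hp, hpF, hpC, fun x hx => ?_⟩
  have := hF'.nonpos_of_negOn (isRoot_act hvw hp)
    (fun y hy => by rw [eval_act hvw hp]; exact hneg y hy) x hx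
  rwa [eval_act hvw hp, mul_inv_rev, Equiv.Perm.mul_apply,
    apply_eq_self_of_mem_parabolic (inv_mem hv) hx] at this

theorem exists_relInversions_subset (hC : Φ.IsAlcove C) (hF' : Φ.IsFacet C F')
    (hw : w ∈ Φ.weylGroup) : ∃ v ∈ Φ.parabolic F',
      Φ.relInversions C F F' w ⊆ Φ.inversions C (v * w) \ {q | VanishOn F q} := by
  obtain ⟨x₀, hx₀⟩ := hC.nonempty
  obtain ⟨z, hz⟩ := hF'.nonempty
  -- roots vanishing at `z` take opposite values at `y` and at `w x₀`
  set y : V := (2 : ℝ) • z - w x₀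
  have hy : ∀ q, Φ.IsRoot q → VanishOn F' q → eval q y = -eval (act w⁻¹ q) x₀ :=
    fun q hq hqF' => by
      rw [eval_two_smul_sub, hqF' z hz, eval_act (inv_mem hw) hq, inv_inv]
      ring
  obtain ⟨g, hg, hpos⟩ := exists_mem_parabolic_forall_pos hC hF'.nonempty (y := y)
    fun q hq hqF' => by
      rw [hy q hq hqF', neg_ne_zero]
      exact hC.eval_ne_zero (isRoot_act (inv_mem hw) hq) hx₀
  refine ⟨g⁻¹, inv_mem hg, fun p ⟨hp, hpF, hpC, hpF'⟩ => ⟨⟨hp, hpC, ?_⟩, hpF⟩⟩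
  have hvw := mul_mem (parabolic_le_weylGroup F' (inv_mem hg)) hw
  have hq := isRoot_act hvw hp
  have hqF' : ∀ x ∈ F', eval (act (g⁻¹ * w) p) x = eval p (w⁻¹ x) := fun x hx => by
    rw [eval_act hvw hp, mul_inv_rev, inv_inv, Equiv.Perm.mul_apply,
      apply_eq_self_of_mem_parabolic hg hx]
  suffices ¬PosOn C (act (g⁻¹ * w) p) by
    simpa only [NegOn, eval_act hvw hp] using hC.negOn_of_not_posOn hq this
  intro hqC
  rcases hF'.trichotomy _ hq with hvan | hposF | hnegF
  · have hwp : VanishOn F' (act w p) := fun x hx => by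
      rw [eval_act hw hp, ← hqF' x hx, hvan x hx]
    have := hpos _ hq hvan hqC
    have hpt : (g⁻¹ * w)⁻¹ (g⁻¹ y) = w⁻¹ y := by simp
    rw [eval_act hvw hp, hpt, ← eval_act hw hp, hy _ (isRoot_act hw hp) hwp,
      act_inv_act hw hp] at this
    linarith [hpC x₀ hx₀]
  · exact (hposF z hz).not_ge (hqF' z hz ▸ hpF' z hz)
  · exact (hnegF z hz).not_ge (hF'.nonneg_of_posOn _ hq hqC z hz)

end RootDatum

end AffineWeyl

open AffineWeyl RootDatum

theorem length_distinguished_rep_eq_card_affine_roots_general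
    {V : Type*} [AddCommGroup V] [Module ℝ V]
    (pos : Finset (Module.Dual ℝ V)) (C : Set V)
    (hC : C.Nonempty)
    (hCpos : ∀ a ∈ pos, ∀ x ∈ C, 0 < a x ∧ a x < 1)
    (cv : Module.Dual ℝ V → V)
    (hcv : ∀ a ∈ pos, a (cv a) = 2)
    (hcry : ∀ a ∈ pos, ∀ b : Module.Dual ℝ V, (b ∈ pos ∨ -b ∈ pos) → ∃ n : ℤ, b (cv a) = n)
    (hinv : ∀ a ∈ pos, ∀ b : Module.Dual ℝ V, (b ∈ pos ∨ -b ∈ pos) →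
      ∃ c : Module.Dual ℝ V, (c ∈ pos ∨ -c ∈ pos) ∧ ∀ x : V, b x - a x * b (cv a) = c x)
    (r : Module.Dual ℝ V → ℤ → Equiv.Perm V)
    (hr : ∀ a k (x : V), r a k x = x - (a x + (k : ℝ)) • cv a)
    -- the facets `F` and `F'`, contained in the closure of the alcove `C`:
    (F F' : Set V) (hFne : F.Nonempty) (hF'ne : F'.Nonempty)
    (hFcl : ∀ (a : Module.Dual ℝ V) (k : ℤ), (a ∈ pos ∨ -a ∈ pos) →
      (∀ x ∈ C, 0 < a x + (k : ℝ)) → ∀ x ∈ F, 0 ≤ a x + (k : ℝ))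
    (hF'cl : ∀ (a : Module.Dual ℝ V) (k : ℤ), (a ∈ pos ∨ -a ∈ pos) →
      (∀ x ∈ C, 0 < a x + (k : ℝ)) → ∀ x ∈ F', 0 ≤ a x + (k : ℝ))
    (hFsign : ∀ (a : Module.Dual ℝ V) (k : ℤ), (a ∈ pos ∨ -a ∈ pos) →
      (∀ x ∈ F, a x + (k : ℝ) = 0) ∨ (∀ x ∈ F, 0 < a x + (k : ℝ)) ∨
        (∀ x ∈ F, a x + (k : ℝ) < 0))
    (hF'sign : ∀ (a : Module.Dual ℝ V) (k : ℤ), (a ∈ pos ∨ -a ∈ pos) →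
      (∀ x ∈ F', a x + (k : ℝ) = 0) ∨ (∀ x ∈ F', 0 < a x + (k : ℝ)) ∨
        (∀ x ∈ F', a x + (k : ℝ) < 0))
    (w m : Equiv.Perm V)
    (hw : w ∈ Subgroup.closure {σ : Equiv.Perm V | ∃ a ∈ pos, ∃ k : ℤ, σ = r a k})
    -- `m` is a minimal-length representative `(vw)^F` for some `v ∈ W_{F'}` …
    (hm : ∃ v ∈ Subgroup.closure {σ : Equiv.Perm V |
        ∃ a ∈ pos, ∃ k : ℤ, (∀ x ∈ F', a x + (k : ℝ) = 0) ∧ σ = r a k},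
      (∃ u ∈ Subgroup.closure {σ : Equiv.Perm V |
          ∃ a ∈ pos, ∃ k : ℤ, (∀ x ∈ F, a x + (k : ℝ) = 0) ∧ σ = r a k}, m = v * w * u) ∧
      ∀ u ∈ Subgroup.closure {σ : Equiv.Perm V |
          ∃ a ∈ pos, ∃ k : ℤ, (∀ x ∈ F, a x + (k : ℝ) = 0) ∧ σ = r a k},
        affineLength pos C m ≤ affineLength pos C (v * w * u))
    -- … of maximal length among all such minimal representatives: `m = {}_{F'}w^F`.
    (hmax : ∀ m' : Equiv.Perm V,
      (∃ v ∈ Subgroup.closure {σ : Equiv.Perm V |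
          ∃ a ∈ pos, ∃ k : ℤ, (∀ x ∈ F', a x + (k : ℝ) = 0) ∧ σ = r a k},
        (∃ u ∈ Subgroup.closure {σ : Equiv.Perm V |
            ∃ a ∈ pos, ∃ k : ℤ, (∀ x ∈ F, a x + (k : ℝ) = 0) ∧ σ = r a k}, m' = v * w * u) ∧
        ∀ u ∈ Subgroup.closure {σ : Equiv.Perm V |
            ∃ a ∈ pos, ∃ k : ℤ, (∀ x ∈ F, a x + (k : ℝ) = 0) ∧ σ = r a k},
          affineLength pos C m' ≤ affineLength pos C (v * w * u)) →
      affineLength pos C m' ≤ affineLength pos C m) :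
    affineLength pos C m = Set.ncard {p : Module.Dual ℝ V × ℤ |
      (p.1 ∈ pos ∨ -p.1 ∈ pos) ∧
      ¬ (∀ x ∈ F, p.1 x + (p.2 : ℝ) = 0) ∧
      (∀ x ∈ C, 0 < p.1 x + (p.2 : ℝ)) ∧
      (∀ x ∈ F', p.1 (w⁻¹ x) + (p.2 : ℝ) ≤ 0)} := by
  let Φ : RootDatum V := ⟨pos, cv, r, hcv, hcry, hinv, hr⟩
  have hC' : Φ.IsAlcove C := ⟨hC, hCpos⟩
  have hF : Φ.IsFacet C F := ⟨hFne, fun p hp => hFcl p.1 p.2 hp, fun p hp => hFsign p.1 p.2 hp⟩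
  have hF' : Φ.IsFacet C F' :=
    ⟨hF'ne, fun p hp => hF'cl p.1 p.2 hp, fun p hp => hF'sign p.1 p.2 hp⟩
  change affineLength Φ.pos C m = (Φ.relInversions C F F' w).ncard
  obtain ⟨v, hv, ⟨u, hu, rfl⟩, hmin⟩ := hm
  have hvw : v * w ∈ Φ.weylGroup := mul_mem (parabolic_le_weylGroup F' hv) hw
  obtain ⟨u₀, hu₀, hlen₀⟩ := exists_affineLength_mul_eq hC' hF hvw
  obtain ⟨v₁, hv₁, hsub⟩ := exists_relInversions_subset hC' hF' hw
  have hv₁w : v₁ * w ∈ Φ.weylGroup := mul_mem (parabolic_le_weylGroup F' hv₁) hw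
  obtain ⟨u₁, hu₁, hlen₁⟩ := exists_affineLength_mul_eq hC' hF hv₁w
  have hmax₁ := hmax (v₁ * w * u₁)
    ⟨v₁, hv₁, ⟨u₁, hu₁, rfl⟩, fun u hu => hlen₁ ▸ ncard_diff_le_affineLength hC' hF hu⟩
  refine le_antisymm ?_ ?_
  · calc affineLength Φ.pos C (v * w * u) ≤ affineLength Φ.pos C (v * w * u₀) := hmin u₀ hu₀
      _ = (Φ.inversions C (v * w) \ {q | VanishOn F q}).ncard := hlen₀
      _ ≤ (Φ.relInversions C F F' w).ncard :=
        Set.ncard_le_ncard (inversions_diff_subset_relInversions hF' hw hv)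
          (finite_relInversions hC' hF'ne)
  · calc (Φ.relInversions C F F' w).ncard
        ≤ (Φ.inversions C (v₁ * w) \ {q | VanishOn F q}).ncard :=
          Set.ncard_le_ncard hsub ((finite_inversions hC' _).sdiff)
      _ = affineLength Φ.pos C (v₁ * w * u₁) := hlen₁.symm
      _ ≤ affineLength Φ.pos C (v * w * u) := hmax₁

/-- **Waldspurger's lemma.** Let the affine Weyl group `W` of a reduced
root system act on the affine roots `Σ`, with fundamental alcove `C`, and let `F'`, `F` be
facets in the closure of `C` with parabolic subgroups `W_{F'}`, `W_F`.  For `w ∈ W`, the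
length of the representative `{}_{F'}w^F` (the maximal-length element among the minimal
coset representatives `(vw)^F` for `v ∈ W_{F'}`) equals the number of affine roots
`α ∈ Σ \ Σ(F)` with `α(C) > 0` and `w(α)(F') ≤ 0`. -/
theorem length_distinguished_rep_eq_card_affine_roots
    {V : Type*} [AddCommGroup V] [Module ℝ V]
    (pos : Finset (Module.Dual ℝ V)) (C : Set V)
    (hC : C.Nonempty)
    (hCpos : ∀ a ∈ pos, ∀ x ∈ C, 0 < a x ∧ a x < 1)
    (hred : ∀ a ∈ pos, (2 : ℝ) • a ∉ pos)
    (cv : Module.Dual ℝ V → V)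
    (hcv : ∀ a ∈ pos, a (cv a) = 2)
    (hcry : ∀ a ∈ pos, ∀ b : Module.Dual ℝ V, (b ∈ pos ∨ -b ∈ pos) → ∃ n : ℤ, b (cv a) = n)
    (hinv : ∀ a ∈ pos, ∀ b : Module.Dual ℝ V, (b ∈ pos ∨ -b ∈ pos) →
      ∃ c : Module.Dual ℝ V, (c ∈ pos ∨ -c ∈ pos) ∧ ∀ x : V, b x - a x * b (cv a) = c x)
    (r : Module.Dual ℝ V → ℤ → Equiv.Perm V)
    (hr : ∀ a k (x : V), r a k x = x - (a x + (k : ℝ)) • cv a)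
    -- the facets `F` and `F'`, contained in the closure of the alcove `C`:
    (F F' : Set V) (hFne : F.Nonempty) (hF'ne : F'.Nonempty)
    (hFcl : ∀ (a : Module.Dual ℝ V) (k : ℤ), (a ∈ pos ∨ -a ∈ pos) →
      (∀ x ∈ C, 0 < a x + (k : ℝ)) → ∀ x ∈ F, 0 ≤ a x + (k : ℝ))
    (hF'cl : ∀ (a : Module.Dual ℝ V) (k : ℤ), (a ∈ pos ∨ -a ∈ pos) →
      (∀ x ∈ C, 0 < a x + (k : ℝ)) → ∀ x ∈ F', 0 ≤ a x + (k : ℝ))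
    (hFsign : ∀ (a : Module.Dual ℝ V) (k : ℤ), (a ∈ pos ∨ -a ∈ pos) →
      (∀ x ∈ F, a x + (k : ℝ) = 0) ∨ (∀ x ∈ F, 0 < a x + (k : ℝ)) ∨
        (∀ x ∈ F, a x + (k : ℝ) < 0))
    (hF'sign : ∀ (a : Module.Dual ℝ V) (k : ℤ), (a ∈ pos ∨ -a ∈ pos) →
      (∀ x ∈ F', a x + (k : ℝ) = 0) ∨ (∀ x ∈ F', 0 < a x + (k : ℝ)) ∨
        (∀ x ∈ F', a x + (k : ℝ) < 0))
    (w m : Equiv.Perm V)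
    (hw : w ∈ Subgroup.closure {σ : Equiv.Perm V | ∃ a ∈ pos, ∃ k : ℤ, σ = r a k})
    -- `m` is a minimal-length representative `(vw)^F` for some `v ∈ W_{F'}` …
    (hm : ∃ v ∈ Subgroup.closure {σ : Equiv.Perm V |
        ∃ a ∈ pos, ∃ k : ℤ, (∀ x ∈ F', a x + (k : ℝ) = 0) ∧ σ = r a k},
      (∃ u ∈ Subgroup.closure {σ : Equiv.Perm V |
          ∃ a ∈ pos, ∃ k : ℤ, (∀ x ∈ F, a x + (k : ℝ) = 0) ∧ σ = r a k}, m = v * w * u) ∧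
      ∀ u ∈ Subgroup.closure {σ : Equiv.Perm V |
          ∃ a ∈ pos, ∃ k : ℤ, (∀ x ∈ F, a x + (k : ℝ) = 0) ∧ σ = r a k},
        affineLength pos C m ≤ affineLength pos C (v * w * u))
    -- … of maximal length among all such minimal representatives: `m = {}_{F'}w^F`.
    (hmax : ∀ m' : Equiv.Perm V,
      (∃ v ∈ Subgroup.closure {σ : Equiv.Perm V |
          ∃ a ∈ pos, ∃ k : ℤ, (∀ x ∈ F', a x + (k : ℝ) = 0) ∧ σ = r a k},
        (∃ u ∈ Subgroup.closure {σ : Equiv.Perm V |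
            ∃ a ∈ pos, ∃ k : ℤ, (∀ x ∈ F, a x + (k : ℝ) = 0) ∧ σ = r a k}, m' = v * w * u) ∧
        ∀ u ∈ Subgroup.closure {σ : Equiv.Perm V |
            ∃ a ∈ pos, ∃ k : ℤ, (∀ x ∈ F, a x + (k : ℝ) = 0) ∧ σ = r a k},
          affineLength pos C m' ≤ affineLength pos C (v * w * u)) →
      affineLength pos C m' ≤ affineLength pos C m) :
    affineLength pos C m = Set.ncard {p : Module.Dual ℝ V × ℤ |
      (p.1 ∈ pos ∨ -p.1 ∈ pos) ∧
      ¬ (∀ x ∈ F, p.1 x + (p.2 : ℝ) = 0) ∧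
      (∀ x ∈ C, 0 < p.1 x + (p.2 : ℝ)) ∧
      (∀ x ∈ F', p.1 (w⁻¹ x) + (p.2 : ℝ) ≤ 0)} :=
  length_distinguished_rep_eq_card_affine_roots_general pos C hC hCpos cv hcv hcry hinv r hr F F'
    hFne hF'ne hFcl hF'cl hFsign hF'sign w m hw hm hmax
end
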